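/- arXiv:1409.4195 — 11 statements merged into one kernel-verified Lean document; each statement's English description precedes it below -/
import Mathlib

section
/- Let A : X → X be a linear operator on a complex Banach space X equipped with a semi-inner product [·,·] compatible with the norm. If R(A) ∩ N(A) ≠ {0}, then the cosine of A, defined as cos A = inf{Re[Ax, x]/(‖Ax‖ ‖x‖) : x ∉ N(A)}, equals −1 (equivalently, the angle φ(A) = arccos(cos A) equals π). -/
/-!
Cauchy–Schwarz gives `cos A ≥ -1`. For the reverse inequality pick `0 ≠ y = A w` with `A y = 0`
and test `x = w - t y`, so that `A x = y`. Since `w = x + t y`, the semi-inner product gives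
`t Re[y, x] = Re[w, x] - ‖x‖² ≤ ‖x‖ (‖w‖ - ‖x‖)`, and `‖x‖ ≥ t ‖y‖ - ‖w‖`; hence
`Re[A x, x] / (‖A x‖ ‖x‖) ≤ 2 ‖w‖ / (t ‖y‖) - 1`, which tends to `-1` as `t → ∞`.
-/

/-- A semi-inner product compatible with the norm of a complex normed space. -/
structure SemiInnerProduct (X : Type*) [NormedAddCommGroup X] [NormedSpace ℂ X] where
  sip : X → X → ℂ
  add_left : ∀ x y z : X, sip (x + y) z = sip x z + sip y z
  smul_left : ∀ (a : ℂ) (x y : X), sip (a • x) y = a * sip x y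
  norm_sq : ∀ x : X, sip x x = (‖x‖ : ℂ) ^ 2
  abs_le : ∀ x y : X, ‖sip x y‖ ≤ ‖x‖ * ‖y‖

open Filter Topology

namespace SemiInnerProduct

variable {X : Type*} [NormedAddCommGroup X] [NormedSpace ℂ X] (sip : SemiInnerProduct X)

theorem abs_re_le (x y : X) : |(sip.sip x y).re| ≤ ‖x‖ * ‖y‖ :=
  (Complex.abs_re_le_norm _).trans (sip.abs_le x y)

theorem neg_one_le_re_div_norm_mul (x y : X) : -1 ≤ (sip.sip x y).re / (‖x‖ * ‖y‖) := by
  rcases (mul_nonneg (norm_nonneg x) (norm_nonneg y)).eq_or_lt with h0 | hpos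
  · rw [← h0, div_zero]
    norm_num
  · rw [le_div_iff₀ hpos, neg_one_mul]
    exact (_root_.abs_le.mp (sip.abs_re_le x y)).1

theorem re_add_smul_left_self (x y : X) (t : ℝ) :
    (sip.sip (x + (t : ℂ) • y) x).re = ‖x‖ ^ 2 + t * (sip.sip y x).re := by
  rw [sip.add_left, sip.smul_left, sip.norm_sq, Complex.add_re, Complex.re_ofReal_mul,
    ← Complex.ofReal_pow, Complex.ofReal_re]

theorem re_div_norm_mul_sub_smul_le (w : X) {y : X} (hy : y ≠ 0) {t : ℝ} (ht : 0 < t)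
    (hx : w - (t : ℂ) • y ≠ 0) :
    (sip.sip y (w - (t : ℂ) • y)).re / (‖y‖ * ‖w - (t : ℂ) • y‖) ≤ 2 * ‖w‖ / ‖y‖ / t - 1 := by
  set x := w - (t : ℂ) • y with hx_def
  have hw : x + (t : ℂ) • y = w := sub_add_cancel w _
  have hpair : ‖x‖ ^ 2 + t * (sip.sip y x).re ≤ ‖w‖ * ‖x‖ := by
    rw [← sip.re_add_smul_left_self, hw]
    exact (_root_.abs_le.mp (sip.abs_re_le w x)).2
  have hnorm : t * ‖y‖ ≤ ‖w‖ + ‖x‖ := by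
    have := norm_sub_le w x
    rwa [hx_def, sub_sub_cancel, norm_smul, Complex.norm_real, Real.norm_of_nonneg ht.le] at this
  have hny := norm_pos_iff.mpr hy
  have hnx := norm_pos_iff.mpr hx
  rw [div_le_iff₀ (mul_pos hny hnx), div_div, div_sub_one (by positivity), div_mul_eq_mul_div,
    le_div_iff₀ (by positivity)]
  nlinarith [mul_le_mul_of_nonneg_left hnorm hnx.le]

end SemiInnerProduct

theorem cos_eq_neg_one_of_range_inter_ker_ne_bot_general
    (X : Type*) [NormedAddCommGroup X] [NormedSpace ℂ X]
    (sip : SemiInnerProduct X) (A : X →ₗ[ℂ] X)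
    (h : LinearMap.range A ⊓ LinearMap.ker A ≠ ⊥) :
    sInf {r : ℝ | ∃ x : X, x ∉ LinearMap.ker A ∧
      r = (sip.sip (A x) x).re / (‖A x‖ * ‖x‖)} = -1 := by
  obtain ⟨y, ⟨⟨w, rfl⟩, hAy : A (A w) = 0⟩, hy⟩ := (Submodule.ne_bot_iff _).mp h
  have hw : w ∉ LinearMap.ker A := fun hk => hy hk
  refine csInf_eq_of_forall_ge_of_forall_gt_exists_lt ⟨_, w, hw, rfl⟩ ?_ fun b hb => ?_
  · rintro _ ⟨x, -, rfl⟩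
    exact sip.neg_one_le_re_div_norm_mul (A x) x
  · have hsmall : Tendsto (fun t : ℝ => 2 * ‖w‖ / ‖A w‖ / t) atTop (𝓝 0) :=
      tendsto_const_nhds.div_atTop tendsto_id
    obtain ⟨t, htb, ht⟩ :=
      ((hsmall.eventually (gt_mem_nhds (neg_lt_iff_pos_add.mp hb))).and
        (eventually_gt_atTop 0)).exists
    set x := w - (t : ℂ) • A w
    have hAx : A x = A w := by simp [x, hAy]
    have hx : x ≠ 0 := fun h0 => hy (by rw [← hAx, h0, map_zero])
    refine ⟨_, ⟨x, fun hk => hy (hAx ▸ hk), rfl⟩, ?_⟩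
    rw [hAx]
    linarith [sip.re_div_norm_mul_sub_smul_le w hy ht hx]

/-- If `R(A) ∩ N(A) ≠ {0}`, then `cos A = -1`, i.e. the angle of `A` is `π`. -/
theorem cos_eq_neg_one_of_range_inter_ker_ne_bot
    (X : Type*) [NormedAddCommGroup X] [NormedSpace ℂ X] [CompleteSpace X]
    (sip : SemiInnerProduct X) (A : X →ₗ[ℂ] X)
    (h : LinearMap.range A ⊓ LinearMap.ker A ≠ ⊥) :
    sInf {r : ℝ | ∃ x : X, x ∉ LinearMap.ker A ∧
      r = (sip.sip (A x) x).re / (‖A x‖ * ‖x‖)} = -1 :=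
  cos_eq_neg_one_of_range_inter_ker_ne_bot_general X sip A h
end

section
/- If A is a linear operator on a complex Banach space X whose angle satisfies φ(A) < π (i.e., cos A > −1), then N(A²) = N(A), i.e., the ascent of A is at most 1; equivalently R(A) ∩ N(A) = {0}. -/
theorem LinearMap.range_inf_ker_eq_bot_of_ker_comp_self_le {R M : Type*} [Semiring R]
    [AddCommMonoid M] [Module R M] {f : M →ₗ[R] M} (h : ker (f ∘ₗ f) ≤ ker f) :
    range f ⊓ ker f = ⊥ := by
  rw [eq_bot_iff]
  rintro _ ⟨⟨x, rfl⟩, hx⟩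
  exact h hx

theorem LinearMap.norm_mul_norm_pos_of_notMem_ker {𝕜 X : Type*} [NormedField 𝕜]
    [NormedAddCommGroup X] [NormedSpace 𝕜 X] {A : X →ₗ[𝕜] X} {x : X} (hx : x ∉ ker A) :
    0 < ‖A x‖ * ‖x‖ :=
  mul_pos (norm_pos_iff.mpr hx) (norm_pos_iff.mpr fun h => hx (h ▸ (ker A).zero_mem))

namespace SemiInnerProduct

variable {X : Type*} [NormedAddCommGroup X] [NormedSpace ℂ X] (sip : SemiInnerProduct X)

def leftLinear (z : X) : X →ₗ[ℂ] ℂ where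
  toFun x := sip.sip x z
  map_add' x y := sip.add_left x y z
  map_smul' a x := sip.smul_left a x z

theorem re_le (x y : X) : (sip.sip x y).re ≤ ‖x‖ * ‖y‖ :=
  (Complex.re_le_norm _).trans (sip.abs_le x y)

theorem neg_le_re (x y : X) : -(‖x‖ * ‖y‖) ≤ (sip.sip x y).re :=
  neg_le_of_abs_le ((Complex.abs_re_le_norm _).trans (sip.abs_le x y))

/-- The paper's `cos A`. -/
noncomputable def operatorCos (A : X →ₗ[ℂ] X) : ℝ :=
  sInf {r : ℝ | ∃ x : X, x ∉ LinearMap.ker A ∧ r = (sip.sip (A x) x).re / (‖A x‖ * ‖x‖)}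

theorem operatorCos_mul_le (A : X →ₗ[ℂ] X) {x : X} (hx : x ∉ LinearMap.ker A) :
    sip.operatorCos A * (‖A x‖ * ‖x‖) ≤ (sip.sip (A x) x).re := by
  have hbdd : BddBelow {r : ℝ | ∃ x : X, x ∉ LinearMap.ker A ∧
      r = (sip.sip (A x) x).re / (‖A x‖ * ‖x‖)} := by
    refine ⟨-1, ?_⟩
    rintro _ ⟨w, hw, rfl⟩
    rw [le_div_iff₀ (LinearMap.norm_mul_norm_pos_of_notMem_ker hw)]
    linarith [sip.neg_le_re (A w) w]
  rw [← le_div_iff₀ (LinearMap.norm_mul_norm_pos_of_notMem_ker hx)]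
  exact csInf_le hbdd ⟨x, hx, rfl⟩

theorem norm_sub_smul_add_le {x y : X} {t c : ℝ} (ht : 0 ≤ t) (hz : x - (t : ℂ) • y ≠ 0)
    (hc : c * (‖y‖ * ‖x - (t : ℂ) • y‖) ≤ (sip.sip y (x - (t : ℂ) • y)).re) :
    ‖x - (t : ℂ) • y‖ + t * c * ‖y‖ ≤ ‖x‖ := by
  set z := x - (t : ℂ) • y
  have hsq : ‖z‖ ^ 2 = (sip.sip x z).re - t * (sip.sip y z).re := by
    have h := sip.norm_sq z
    change sip.leftLinear z z = _ at h
    rw [map_sub, map_smul, smul_eq_mul] at h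
    have h := congrArg Complex.re h
    simp only [Complex.sub_re, Complex.re_ofReal_mul, ← Complex.ofReal_pow,
      Complex.ofReal_re] at h
    exact h.symm
  have hmul : (‖z‖ + t * c * ‖y‖) * ‖z‖ ≤ ‖x‖ * ‖z‖ := by
    nlinarith [hsq, sip.re_le x z, mul_le_mul_of_nonneg_left hc ht]
  exact le_of_mul_le_mul_right hmul (norm_pos_iff.mpr hz)

theorem ker_comp_self_le_ker {A : X →ₗ[ℂ] X} {c : ℝ} (hc : -1 < c)
    (hA : ∀ z, z ∉ LinearMap.ker A → c * (‖A z‖ * ‖z‖) ≤ (sip.sip (A z) z).re) :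
    LinearMap.ker (A ∘ₗ A) ≤ LinearMap.ker A := by
  intro x hx
  change A (A x) = 0 at hx
  by_contra hy
  change A x ≠ 0 at hy
  set y := A x
  have hbound : ∀ t : ℝ, 0 ≤ t → t * ((1 + c) * ‖y‖) ≤ 2 * ‖x‖ := by
    intro t ht
    have hAz : A (x - (t : ℂ) • y) = y := by rw [map_sub, map_smul, hx, smul_zero, sub_zero]
    have hz : x - (t : ℂ) • y ≠ 0 := fun h0 => hy (by rw [← hAz, h0, map_zero])
    have hz_notMem : x - (t : ℂ) • y ∉ LinearMap.ker A := by
      rw [LinearMap.mem_ker, hAz]; exact hy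
    have upper := sip.norm_sub_smul_add_le ht hz (hAz ▸ hA _ hz_notMem)
    have lower : t * ‖y‖ - ‖x‖ ≤ ‖x - (t : ℂ) • y‖ := by
      have h := norm_sub_norm_le ((t : ℂ) • y) x
      rw [norm_sub_rev, norm_smul, Complex.norm_real, Real.norm_of_nonneg ht] at h
      exact h
    linarith
  have hpos : 0 < (1 + c) * ‖y‖ := mul_pos (by linarith) (norm_pos_iff.mpr hy)
  have h := hbound ((2 * ‖x‖ + 1) / ((1 + c) * ‖y‖)) (by positivity)
  rw [div_mul_cancel₀ _ hpos.ne'] at h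
  linarith

end SemiInnerProduct

theorem ascent_le_one_of_angle_lt_pi_general
    (X : Type*) [NormedAddCommGroup X] [NormedSpace ℂ X]
    (sip : SemiInnerProduct X) (A : X →ₗ[ℂ] X)
    (h : -1 < sInf {r : ℝ | ∃ x : X, x ∉ LinearMap.ker A ∧
      r = (sip.sip (A x) x).re / (‖A x‖ * ‖x‖)}) :
    LinearMap.ker (A ∘ₗ A) = LinearMap.ker A ∧
    LinearMap.range A ⊓ LinearMap.ker A = ⊥ := by
  have hker : LinearMap.ker (A ∘ₗ A) ≤ LinearMap.ker A :=
    sip.ker_comp_self_le_ker (c := sip.operatorCos A) h fun _ => sip.operatorCos_mul_le A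
  exact ⟨le_antisymm hker (LinearMap.ker_le_ker_comp A A),
    LinearMap.range_inf_ker_eq_bot_of_ker_comp_self_le hker⟩

/-- If the angle of `A` is less than `π` (i.e. `cos A > -1`), then the ascent of `A` is at
most `1`: `N(A²) = N(A)`, equivalently `R(A) ∩ N(A) = {0}`. -/
theorem ascent_le_one_of_angle_lt_pi
    (X : Type*) [NormedAddCommGroup X] [NormedSpace ℂ X] [CompleteSpace X]
    (sip : SemiInnerProduct X) (A : X →ₗ[ℂ] X)
    (h : -1 < sInf {r : ℝ | ∃ x : X, x ∉ LinearMap.ker A ∧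
      r = (sip.sip (A x) x).re / (‖A x‖ * ‖x‖)}) :
    LinearMap.ker (A ∘ₗ A) = LinearMap.ker A ∧
    LinearMap.range A ⊓ LinearMap.ker A = ⊥ :=
  ascent_le_one_of_angle_lt_pi_general X sip A h
end

section
/- If A is an accretive linear operator on a complex Banach space X (i.e., Re[Ax, x] ≥ 0 for all x, for some compatible semi-inner product), then its ascent is at most 1, i.e., R(A) ∩ N(A) = {0}. -/
theorem eq_zero_of_forall_nonneg_mul_le {a b : ℝ} (ha : 0 ≤ a) (h : ∀ t : ℝ, 0 ≤ t → t * a ≤ b) :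
    a = 0 := by
  by_contra ha0
  have ha_pos : 0 < a := lt_of_le_of_ne ha (Ne.symm ha0)
  have hb : 0 ≤ b := by simpa using h 0 le_rfl
  have := h ((b + 1) / a) (by positivity)
  rw [div_mul_cancel₀ _ ha_pos.ne'] at this
  linarith

namespace SemiInnerProduct

variable {X : Type*} [NormedAddCommGroup X] [NormedSpace ℂ X] (sip : SemiInnerProduct X)

theorem re_sip_self (x : X) : (sip.sip x x).re = ‖x‖ ^ 2 := by
  rw [sip.norm_sq, ← Complex.ofReal_pow, Complex.ofReal_re]

def IsAccretive (A : X → X) : Prop :=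
  ∀ x, 0 ≤ (sip.sip (A x) x).re

variable {sip}

theorem IsAccretive.norm_le_norm_add_smul {A : X → X} (hA : sip.IsAccretive A) {t : ℝ}
    (ht : 0 ≤ t) (u : X) : ‖u‖ ≤ ‖u + (t : ℂ) • A u‖ := by
  have key : ‖u‖ ^ 2 ≤ ‖u + (t : ℂ) • A u‖ * ‖u‖ :=
    calc ‖u‖ ^ 2 ≤ ‖u‖ ^ 2 + t * (sip.sip (A u) u).re :=
          le_add_of_nonneg_right (mul_nonneg ht (hA u))
      _ = (sip.sip (u + (t : ℂ) • A u) u).re := by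
          rw [sip.add_left, sip.smul_left, Complex.add_re, Complex.re_ofReal_mul, re_sip_self]
      _ ≤ ‖sip.sip (u + (t : ℂ) • A u) u‖ := Complex.re_le_norm _
      _ ≤ ‖u + (t : ℂ) • A u‖ * ‖u‖ := sip.abs_le _ _
  by_contra! hlt
  nlinarith [norm_nonneg (u + (t : ℂ) • A u)]

theorem IsAccretive.apply_eq_zero_of_apply_apply_eq_zero {A : X →ₗ[ℂ] X}
    (hA : sip.IsAccretive A) {x : X} (hx : A (A x) = 0) : A x = 0 := by
  have bound : ∀ t : ℝ, 0 ≤ t → t * ‖A x‖ ≤ 2 * ‖x‖ := by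
    intro t ht
    have hu : ‖x - (t : ℂ) • A x‖ ≤ ‖x‖ := by
      simpa [hx] using hA.norm_le_norm_add_smul ht (x - (t : ℂ) • A x)
    calc t * ‖A x‖ = ‖x - (x - (t : ℂ) • A x)‖ := by
          rw [sub_sub_cancel, norm_smul, Complex.norm_of_nonneg ht]
      _ ≤ ‖x‖ + ‖x - (t : ℂ) • A x‖ := norm_sub_le _ _
      _ ≤ 2 * ‖x‖ := by linarith
  exact norm_eq_zero.mp (eq_zero_of_forall_nonneg_mul_le (norm_nonneg _) bound)

end SemiInnerProduct

theorem ascent_le_one_of_accretive_general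
    (X : Type*) [NormedAddCommGroup X] [NormedSpace ℂ X]
    (sip : SemiInnerProduct X) (A : X →ₗ[ℂ] X)
    (h : ∀ x : X, 0 ≤ (sip.sip (A x) x).re) :
    LinearMap.ker (A ∘ₗ A) = LinearMap.ker A ∧
    LinearMap.range A ⊓ LinearMap.ker A = ⊥ := by
  have hA : sip.IsAccretive A := h
  constructor
  · ext x
    simp only [LinearMap.mem_ker, LinearMap.comp_apply]
    exact ⟨hA.apply_eq_zero_of_apply_apply_eq_zero, fun hx => by rw [hx, map_zero]⟩
  · rw [Submodule.eq_bot_iff]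
    rintro _ ⟨⟨x, rfl⟩, hx⟩
    exact hA.apply_eq_zero_of_apply_apply_eq_zero hx

/-- An accretive linear operator has ascent at most `1`:
`N(A²) = N(A)`, equivalently `R(A) ∩ N(A) = {0}`. -/
theorem ascent_le_one_of_accretive
    (X : Type*) [NormedAddCommGroup X] [NormedSpace ℂ X] [CompleteSpace X]
    (sip : SemiInnerProduct X) (A : X →ₗ[ℂ] X)
    (h : ∀ x : X, 0 ≤ (sip.sip (A x) x).re) :
    LinearMap.ker (A ∘ₗ A) = LinearMap.ker A ∧
    LinearMap.range A ⊓ LinearMap.ker A = ⊥ :=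
  ascent_le_one_of_accretive_general X sip A h
end

section
/- Let X be a complex Hilbert space and A : X → X a bounded linear operator with closed range. If inf{Re⟨Ax, x⟩/(‖Ax‖‖x‖) : x ∉ N(A)} > −1, then R(A²) is closed (equivalently, R(A) + N(A) is closed). -/
/-!
Write `c` for the infimum in the hypothesis, so `c * ‖A x‖ * ‖x‖ ≤ re ⟪A x, x⟫` with `-1 < c`.
Evaluating this at `s • x + v` with `A v = 0` and letting `s → 0⁺` gives
`c * ‖A x‖ * ‖v‖ ≤ re ⟪A x, v⟫`, and rotating `v` by a unimodular scalar turns it into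
`‖⟪u, v⟫‖ ≤ -c * ‖u‖ * ‖v‖` for `u ∈ R(A)`, `v ∈ N(A)`. So the closed subspaces `R(A)` and `N(A)`
meet at a positive angle, which makes `(u, v) ↦ u + v` bounded below and `R(A) + N(A)` closed.
Finally `R(A²) = A (R(A) + N(A))`, and by the open mapping theorem an operator with closed range
maps closed subspaces containing its kernel to closed subspaces.
-/

open scoped InnerProductSpace ComplexConjugate
open RCLike

namespace ContinuousLinearMap

variable {𝕜 E F : Type*} [NontriviallyNormedField 𝕜]
  [NormedAddCommGroup E] [NormedSpace 𝕜 E] [CompleteSpace E]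
  [NormedAddCommGroup F] [NormedSpace 𝕜 F] [CompleteSpace F]

theorem isClosed_map_of_ker_le {A : E →L[𝕜] F}
    (hR : IsClosed ((LinearMap.range (A : E →ₗ[𝕜] F) : Submodule 𝕜 F) : Set F))
    {M : Submodule 𝕜 E} (hM : IsClosed (M : Set E)) (hker : LinearMap.ker (A : E →ₗ[𝕜] F) ≤ M) :
    IsClosed ((M.map (A : E →ₗ[𝕜] F) : Submodule 𝕜 F) : Set F) := by
  set R := LinearMap.range (A : E →ₗ[𝕜] F)
  have : CompleteSpace R := hR.completeSpace_coe
  set f : E →L[𝕜] R := A.codRestrict R (LinearMap.mem_range_self (A : E →ₗ[𝕜] F))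
  have hsurj : Function.Surjective f := by
    rintro ⟨_, x, rfl⟩
    exact ⟨x, rfl⟩
  have hquot : Topology.IsQuotientMap f := (f.isOpenMap hsurj).isQuotientMap f.continuous hsurj
  have hsat : f ⁻¹' (f '' M) = M := by
    have := Submodule.comap_map_eq (f : E →ₗ[𝕜] R) M
    rw [ker_codRestrict, sup_eq_left.mpr hker] at this
    exact congrArg (fun p : Submodule 𝕜 E => (p : Set E)) this
  have hfM : IsClosed (f '' M) := hquot.isClosed_preimage.mp (by rwa [hsat])
  convert hR.isClosedMap_subtype_val _ hfM
  ext y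
  simp [f]

theorem isClosed_range_comp_self {A : E →L[𝕜] E}
    (hR : IsClosed ((LinearMap.range (A : E →ₗ[𝕜] E) : Submodule 𝕜 E) : Set E))
    (hsup : IsClosed ((LinearMap.range (A : E →ₗ[𝕜] E) ⊔ LinearMap.ker (A : E →ₗ[𝕜] E) :
      Submodule 𝕜 E) : Set E)) :
    IsClosed ((LinearMap.range ((A ∘L A : E →L[𝕜] E) : E →ₗ[𝕜] E) : Submodule 𝕜 E) : Set E) := by
  convert isClosed_map_of_ker_le hR hsup le_sup_right using 2
  rw [Submodule.map_sup, LinearMap.le_ker_iff_map.mp le_rfl, sup_bot_eq, ← LinearMap.range_comp]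
  rfl

end ContinuousLinearMap

section InnerProductSpace

variable {𝕜 E : Type*} [RCLike 𝕜] [NormedAddCommGroup E] [InnerProductSpace 𝕜 E]

theorem neg_one_le_re_inner_div_norm_mul_norm (x y : E) :
    -1 ≤ re ⟪x, y⟫_𝕜 / (‖x‖ * ‖y‖) := by
  rcases (mul_nonneg (norm_nonneg x) (norm_nonneg y)).eq_or_lt with h | h
  · simp [← h]
  · rw [le_div_iff₀ h, neg_one_mul]
    exact neg_le_of_abs_le ((abs_re_le_norm _).trans (norm_inner_le_norm x y))

theorem ContinuousLinearMap.le_re_inner_apply_of_apply_eq_zero {A : E →L[𝕜] E} {c : ℝ}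
    (h : ∀ x, A x ≠ 0 → c * (‖A x‖ * ‖x‖) ≤ re ⟪A x, x⟫_𝕜) (x : E) {v : E} (hv : A v = 0) :
    c * (‖A x‖ * ‖v‖) ≤ re ⟪A x, v⟫_𝕜 := by
  by_cases hx : A x = 0
  · simp [hx]
  have hscaled : ∀ s ∈ Set.Ioi (0 : ℝ),
      c * (‖A x‖ * ‖(s : 𝕜) • x + v‖) ≤ re ⟪A x, (s : 𝕜) • x + v⟫_𝕜 := by
    intro s (hs : 0 < s)
    have hA : A ((s : 𝕜) • x + v) = (s : 𝕜) • A x := by simp [hv]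
    have := h ((s : 𝕜) • x + v) (by simp [hA, hs.ne', hx])
    rw [hA, norm_smul, inner_smul_left, conj_ofReal, re_ofReal_mul, norm_ofReal, abs_of_pos hs]
      at this
    exact le_of_mul_le_mul_left (by linarith) hs
  simpa using ContinuousWithinAt.closure_le (x := 0) (s := Set.Ioi 0) (by simp)
    (by fun_prop : Continuous fun s : ℝ => c * (‖A x‖ * ‖(s : 𝕜) • x + v‖)).continuousWithinAt
    (by fun_prop : Continuous fun s : ℝ => re ⟪A x, (s : 𝕜) • x + v⟫_𝕜).continuousWithinAt hscaled

theorem norm_inner_le_of_forall_mem_le_re_inner {V : Submodule 𝕜 E} {u : E} {c : ℝ}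
    (h : ∀ v ∈ V, c * (‖u‖ * ‖v‖) ≤ re ⟪u, v⟫_𝕜) {v : E} (hv : v ∈ V) :
    ‖⟪u, v⟫_𝕜‖ ≤ -c * (‖u‖ * ‖v‖) := by
  set z := ⟪u, v⟫_𝕜
  have hrot := h (-(conj z) • v) (V.smul_mem _ hv)
  rw [norm_smul, norm_neg, norm_conj, inner_smul_right, neg_mul, RCLike.conj_mul, map_neg, ← ofReal_pow,
    ofReal_re] at hrot
  nlinarith [h v hv, re_le_norm z, norm_nonneg z]

theorem one_sub_mul_max_norm_le_norm_add {u v : E} {k : ℝ} (hk₀ : 0 ≤ k) (hk₁ : k ≤ 1)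
    (h : ‖⟪u, v⟫_𝕜‖ ≤ k * (‖u‖ * ‖v‖)) : (1 - k) * max ‖u‖ ‖v‖ ≤ ‖u + v‖ := by
  have hsq : (1 - k) * (‖u‖ ^ 2 + ‖v‖ ^ 2) ≤ ‖u + v‖ ^ 2 := by
    rw [@norm_add_sq 𝕜]
    nlinarith [neg_le_of_abs_le ((abs_re_le_norm ⟪u, v⟫_𝕜).trans h), sq_nonneg (‖u‖ - ‖v‖)]
  rw [mul_max_of_nonneg _ _ (sub_nonneg.mpr hk₁)]
  refine max_le ?_ ?_ <;> refine le_of_pow_le_pow_left₀ two_ne_zero (norm_nonneg _) ?_ <;>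
    nlinarith [mul_nonneg hk₀ (sq_nonneg ‖u‖), mul_nonneg hk₀ (sq_nonneg ‖v‖)]

theorem Submodule.isClosed_sup_of_norm_inner_le [CompleteSpace E] {M N : Submodule 𝕜 E}
    (hM : IsClosed (M : Set E)) (hN : IsClosed (N : Set E)) {k : ℝ} (hk : k < 1)
    (h : ∀ u ∈ M, ∀ v ∈ N, ‖⟪u, v⟫_𝕜‖ ≤ k * (‖u‖ * ‖v‖)) :
    IsClosed ((M ⊔ N : Submodule 𝕜 E) : Set E) := by
  have : CompleteSpace M := hM.completeSpace_coe
  have : CompleteSpace N := hN.completeSpace_coe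
  set k' := max k 0
  have hk' : 0 < 1 - k' := by simp [k', hk]
  set Φ : M × N →L[𝕜] E := M.subtypeL.coprod N.subtypeL
  have hbound : ∀ p : M × N, ‖p‖ ≤ (1 - k')⁻¹ * ‖Φ p‖ := by
    rintro ⟨⟨u, hu⟩, ⟨v, hv⟩⟩
    rw [le_inv_mul_iff₀ hk']
    exact one_sub_mul_max_norm_le_norm_add (le_max_right k 0) (max_le hk.le zero_le_one)
      ((h u hu v hv).trans (by gcongr; exact le_max_left k 0))
  have hanti : AntilipschitzWith ⟨(1 - k')⁻¹, by positivity⟩ Φ :=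
    AddMonoidHomClass.antilipschitz_of_bound Φ hbound
  have hrange : LinearMap.range (Φ : M × N →ₗ[𝕜] E) = M ⊔ N := by
    simp [Φ, LinearMap.range_coprod]
  rw [← hrange]
  exact hanti.isClosed_range Φ.uniformContinuous

end InnerProductSpace

/-- In a Hilbert space, if `A` has closed range and `φ(A) < π`, then `R(A²)` is closed
(equivalently, `R(A) + N(A)` is closed). -/
theorem range_sq_closed_of_angle_lt_pi
    (X : Type*) [NormedAddCommGroup X] [InnerProductSpace ℂ X] [CompleteSpace X]
    (A : X →L[ℂ] X)
    (hR : IsClosed ((LinearMap.range (A : X →ₗ[ℂ] X) : Submodule ℂ X) : Set X))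
    (hangle : -1 < sInf {r : ℝ | ∃ x : X, x ∉ LinearMap.ker (A : X →ₗ[ℂ] X) ∧
      r = (inner ℂ (A x) x : ℂ).re / (‖A x‖ * ‖x‖)}) :
    IsClosed ((LinearMap.range ((A ∘L A : X →L[ℂ] X) : X →ₗ[ℂ] X) : Submodule ℂ X) : Set X) ∧
    IsClosed ((LinearMap.range (A : X →ₗ[ℂ] X) ⊔ LinearMap.ker (A : X →ₗ[ℂ] X) : Submodule ℂ X) : Set X) := by
  set S := {r : ℝ | ∃ x : X, x ∉ LinearMap.ker (A : X →ₗ[ℂ] X) ∧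
      r = (inner ℂ (A x) x : ℂ).re / (‖A x‖ * ‖x‖)}
  have hbdd : BddBelow S := ⟨-1, by
    rintro _ ⟨x, -, rfl⟩
    exact neg_one_le_re_inner_div_norm_mul_norm (𝕜 := ℂ) (A x) x⟩
  have hnum : ∀ x, A x ≠ 0 → sInf S * (‖A x‖ * ‖x‖) ≤ re ⟪A x, x⟫_ℂ := by
    intro x hx
    have hx0 : x ≠ 0 := by rintro rfl; simp at hx
    rw [← le_div_iff₀ (by positivity)]
    exact csInf_le hbdd ⟨x, hx, rfl⟩
  have hcos : ∀ u ∈ LinearMap.range (A : X →ₗ[ℂ] X), ∀ v ∈ LinearMap.ker (A : X →ₗ[ℂ] X),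
      ‖⟪u, v⟫_ℂ‖ ≤ -sInf S * (‖u‖ * ‖v‖) := by
    rintro _ ⟨x, rfl⟩ v hv
    exact norm_inner_le_of_forall_mem_le_re_inner
      (fun w hw => A.le_re_inner_apply_of_apply_eq_zero hnum x hw) hv
  have hsup := Submodule.isClosed_sup_of_norm_inner_le hR A.isClosed_ker (by linarith) hcos
  exact ⟨A.isClosed_range_comp_self hR hsup, hsup⟩
end

section
/- Let X be a strictly convex, finite-dimensional complex Banach space with compatible semi-inner product, and A : X → X linear with X = R(A) ⊕ N(A). If φ(A) = π, then A has a negative real eigenvalue, i.e., there exist λ < 0 and z ≠ 0 with Az = λz. -/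
/-! If `φ(A) = π`, there are unit vectors `x` with `Re[Ax, x]` arbitrarily close to `-‖Ax‖`,
so the normalised vectors `x` and `Ax / ‖Ax‖` are at distance arbitrarily close to `2`.
By compactness of the unit sphere some unit `y` and unit `c ∈ R(A)` with `Ay = ‖Ay‖ c` are at
distance exactly `2`, and strict convexity forces `c = -y`. Then `Ay = -‖Ay‖ y`, and
`Ay ≠ 0` because `-y = c` lies in `R(A)`, which meets `N(A)` trivially. -/

open Set

namespace SemiInnerProduct

variable {X : Type*} [NormedAddCommGroup X] [NormedSpace ℂ X] (s : SemiInnerProduct X)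

theorem sip_sub_left (x y z : X) : s.sip (x - y) z = s.sip x z - s.sip y z := by
  rw [sub_eq_add_neg, s.add_left, ← neg_one_smul ℂ y, s.smul_left]
  ring

theorem sip_real_smul_left (r : ℝ) (x y : X) : s.sip (r • x) y = r * s.sip x y := by
  rw [← Complex.coe_smul, s.smul_left]

theorem re_sip_le (x y : X) : (s.sip x y).re ≤ ‖x‖ * ‖y‖ :=
  (Complex.re_le_norm _).trans (s.abs_le x y)

theorem neg_le_re_sip (x y : X) : -(‖x‖ * ‖y‖) ≤ (s.sip x y).re :=
  neg_le_of_abs_le ((Complex.abs_re_le_norm _).trans (s.abs_le x y))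

/-- Pairing `‖x‖⁻¹ • x - ‖u‖⁻¹ • u` against `x` gives `(2 - ε) ‖x‖` from below and
`‖‖x‖⁻¹ • x - ‖u‖⁻¹ • u‖ ‖x‖` from above. -/
theorem two_sub_le_norm_sub_normalize {u x : X} {ε : ℝ} (hu : u ≠ 0) (hx : x ≠ 0)
    (h : (s.sip u x).re ≤ (-1 + ε) * (‖u‖ * ‖x‖)) :
    2 - ε ≤ ‖‖x‖⁻¹ • x - ‖u‖⁻¹ • u‖ := by
  have hnu : 0 < ‖u‖ := norm_pos_iff.mpr hu
  have hnx : 0 < ‖x‖ := norm_pos_iff.mpr hx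
  have hpair : (s.sip (‖x‖⁻¹ • x - ‖u‖⁻¹ • u) x).re = ‖x‖ - (s.sip u x).re / ‖u‖ := by
    rw [s.sip_sub_left, s.sip_real_smul_left, s.sip_real_smul_left, s.norm_sq]
    simp only [Complex.sub_re, Complex.re_ofReal_mul, ← Complex.ofReal_pow, Complex.ofReal_re]
    field_simp
  have hlower : (2 - ε) * ‖x‖ ≤ ‖x‖ - (s.sip u x).re / ‖u‖ := by
    have : (s.sip u x).re / ‖u‖ ≤ (-1 + ε) * ‖x‖ := by
      rw [div_le_iff₀ hnu]; linarith
    linarith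
  have hupper := s.re_sip_le (‖x‖⁻¹ • x - ‖u‖⁻¹ • u) x
  rw [hpair] at hupper
  exact le_of_mul_le_mul_right (hlower.trans hupper) hnx

/-- The set whose infimum is `cos φ(A)`. -/
def angleCosines (A : X →ₗ[ℂ] X) : Set ℝ :=
  {r : ℝ | ∃ x : X, x ∉ LinearMap.ker A ∧ r = (s.sip (A x) x).re / (‖A x‖ * ‖x‖)}

theorem neg_one_le_of_mem_angleCosines {A : X →ₗ[ℂ] X} {r : ℝ} (hr : r ∈ s.angleCosines A) :
    -1 ≤ r := by
  obtain ⟨x, hx, rfl⟩ := hr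
  have hx0 : x ≠ 0 := fun h => hx (h ▸ A.mem_ker.mpr (map_zero A))
  have hpos : 0 < ‖A x‖ * ‖x‖ := mul_pos (norm_pos_iff.mpr hx) (norm_pos_iff.mpr hx0)
  rw [le_div_iff₀ hpos]
  linarith [s.neg_le_re_sip (A x) x]

theorem exists_re_sip_lt_of_sInf_angleCosines_eq_neg_one {A : X →ₗ[ℂ] X}
    (hangle : sInf (s.angleCosines A) = -1) {ε : ℝ} (hε : 0 < ε) :
    ∃ x, A x ≠ 0 ∧ x ≠ 0 ∧ (s.sip (A x) x).re < (-1 + ε) * (‖A x‖ * ‖x‖) := by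
  have hne : (s.angleCosines A).Nonempty := by
    by_contra h
    rw [not_nonempty_iff_eq_empty.mp h, Real.sInf_empty] at hangle
    norm_num at hangle
  have hlt : sInf (s.angleCosines A) < -1 + ε := by linarith
  obtain ⟨_, ⟨x, hx, rfl⟩, hr⟩ :=
    (csInf_lt_iff ⟨-1, fun _ => s.neg_one_le_of_mem_angleCosines⟩ hne).mp hlt
  have hx0 : x ≠ 0 := fun h => hx (h ▸ A.mem_ker.mpr (map_zero A))
  refine ⟨x, hx, hx0, ?_⟩
  rwa [div_lt_iff₀ (mul_pos (norm_pos_iff.mpr hx) (norm_pos_iff.mpr hx0))] at hr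

end SemiInnerProduct

section AlignedPairs

variable {X : Type*} [NormedAddCommGroup X] [NormedSpace ℂ X]

def alignedPairs (A : X →ₗ[ℂ] X) : Set (X × X) :=
  {p | ‖p.1‖ = 1 ∧ ‖p.2‖ = 1 ∧ p.2 ∈ LinearMap.range A ∧ A p.1 = ‖A p.1‖ • p.2}

theorem isCompact_alignedPairs [FiniteDimensional ℂ X] (A : X →ₗ[ℂ] X) :
    IsCompact (alignedPairs A) := by
  have hA : Continuous A := A.continuous_of_finiteDimensional
  have hclosed : IsClosed {p : X × X | p.2 ∈ LinearMap.range A ∧ A p.1 = ‖A p.1‖ • p.2} :=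
    ((Submodule.closed_of_finiteDimensional _).preimage continuous_snd).inter
      (isClosed_eq (hA.comp continuous_fst)
        (((continuous_norm.comp hA).comp continuous_fst).smul continuous_snd))
  have hK : IsCompact (Metric.sphere (0 : X) 1 ×ˢ Metric.sphere (0 : X) 1) :=
    (isCompact_sphere 0 1).prod (isCompact_sphere 0 1)
  convert hK.inter_right hclosed using 1
  ext p
  simp [alignedPairs, and_assoc]

theorem exists_mem_alignedPairs_two_sub_le (s : SemiInnerProduct X) {A : X →ₗ[ℂ] X}
    (hangle : sInf (s.angleCosines A) = -1) {ε : ℝ} (hε : 0 < ε) :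
    ∃ p ∈ alignedPairs A, 2 - ε ≤ ‖p.1 - p.2‖ := by
  obtain ⟨x, hAx, hx, hlt⟩ := s.exists_re_sip_lt_of_sInf_angleCosines_eq_neg_one hangle hε
  have hnx : 0 < ‖x‖ := norm_pos_iff.mpr hx
  have hnAx : 0 < ‖A x‖ := norm_pos_iff.mpr hAx
  refine ⟨(‖x‖⁻¹ • x, ‖A x‖⁻¹ • A x), ⟨?_, ?_, ?_, ?_⟩,
    s.two_sub_le_norm_sub_normalize hAx hx hlt.le⟩
  · simp [norm_smul, hnx.ne']
  · simp [norm_smul, hnAx.ne']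
  · rw [← Complex.coe_smul]
    exact Submodule.smul_mem _ _ (LinearMap.mem_range_self A x)
  · simp only [LinearMap.map_smul_of_tower, norm_smul, Real.norm_eq_abs,
      abs_of_pos (inv_pos.mpr hnx), smul_smul]
    congr 1
    field_simp

end AlignedPairs

theorem IsCompact.exists_le_of_forall_sub_le {α : Type*} [TopologicalSpace α] {K : Set α}
    (hK : IsCompact K) {f : α → ℝ} (hf : Continuous f) {a : ℝ}
    (h : ∀ ε > 0, ∃ p ∈ K, a - ε ≤ f p) : ∃ p ∈ K, a ≤ f p := by
  obtain ⟨q, hq, -⟩ := h 1 one_pos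
  obtain ⟨p, hp, hmax⟩ := hK.exists_isMaxOn ⟨q, hq⟩ hf.continuousOn
  refine ⟨p, hp, le_of_forall_sub_le fun ε hε => ?_⟩
  obtain ⟨p', hp', hle⟩ := h ε hε
  exact hle.trans (hmax hp')

theorem eq_neg_of_norm_eq_of_add_le_norm_sub {X : Type*} [NormedAddCommGroup X]
    [NormedSpace ℝ X] [StrictConvexSpace ℝ X] {x y : X} (hxy : ‖x‖ = ‖y‖)
    (h : ‖x‖ + ‖y‖ ≤ ‖x - y‖) : x = -y := by
  refine eq_of_norm_eq_of_norm_add_eq (by rwa [norm_neg]) ?_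
  rw [norm_neg, ← sub_eq_add_neg]
  exact le_antisymm (norm_sub_le x y) h

theorem negative_eigenvalue_of_angle_eq_pi_general
    (X : Type*) [NormedAddCommGroup X] [NormedSpace ℂ X]
    [FiniteDimensional ℂ X] [StrictConvexSpace ℝ X]
    (sip : SemiInnerProduct X) (A : X →ₗ[ℂ] X)
    (hint : LinearMap.range A ⊓ LinearMap.ker A = ⊥)
    (hangle : sInf {r : ℝ | ∃ x : X, x ∉ LinearMap.ker A ∧
      r = (sip.sip (A x) x).re / (‖A x‖ * ‖x‖)} = -1) :
    ∃ (l : ℝ) (z : X), l < 0 ∧ z ≠ 0 ∧ A z = (l : ℂ) • z := by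
  obtain ⟨⟨y, c⟩, ⟨hy, hc, hcA, hAy⟩, hdist⟩ :=
    (isCompact_alignedPairs A).exists_le_of_forall_sub_le (by fun_prop)
      fun ε hε => exists_mem_alignedPairs_two_sub_le sip hangle hε
  dsimp only at hy hc hcA hAy hdist
  have hyc : c = -y := by
    rw [eq_neg_of_norm_eq_of_add_le_norm_sub (hy.trans hc.symm) (by linarith),
      neg_neg]
  have hAy0 : A y ≠ 0 := by
    intro h0
    have hc_mem : c ∈ LinearMap.range A ⊓ LinearMap.ker A := ⟨hcA, by simp [hyc, h0]⟩
    rw [hint, Submodule.mem_bot] at hc_mem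
    simp [hc_mem] at hc
  refine ⟨-‖A y‖, y, by simpa using hAy0, fun h => by simp [h] at hy, ?_⟩
  rwa [Complex.coe_smul, neg_smul, ← smul_neg, ← hyc]

/-- In a strictly convex finite-dimensional space, if `X = R(A) ⊕ N(A)` and `φ(A) = π`,
then `A` has a negative real eigenvalue. -/
theorem negative_eigenvalue_of_angle_eq_pi
    (X : Type*) [NormedAddCommGroup X] [NormedSpace ℂ X]
    [FiniteDimensional ℂ X] [StrictConvexSpace ℝ X]
    (sip : SemiInnerProduct X) (A : X →ₗ[ℂ] X)
    (hsum : LinearMap.range A ⊔ LinearMap.ker A = ⊤)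
    (hint : LinearMap.range A ⊓ LinearMap.ker A = ⊥)
    (hangle : sInf {r : ℝ | ∃ x : X, x ∉ LinearMap.ker A ∧
      r = (sip.sip (A x) x).re / (‖A x‖ * ‖x‖)} = -1) :
    ∃ (l : ℝ) (z : X), l < 0 ∧ z ≠ 0 ∧ A z = (l : ℂ) • z :=
  negative_eigenvalue_of_angle_eq_pi_general X sip A hint hangle
end

section
/- For the bilateral shift A on ℓ²(ℤ), for every nonzero complex number t, inf{Re⟨(tA)x, x⟩/‖(tA)x‖ : ‖x‖ = 1} = −1; i.e., φ(tA) = π for all t ≠ 0, even though A is unitary and hence X = R(A) ⊕ N(A) trivially. -/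
/-!
By Cauchy–Schwarz every quotient `Re⟨tAx, x⟩ / ‖tAx‖` with `‖x‖ = 1` is at least `-1`. For the
other inequality take `ω = -t / |t|` and the block `v = ∑_{0 ≤ n ≤ N} ωⁿ eₙ`: each of the `N`
overlapping coordinates of `Av` and `v` contributes `ω` to `⟨Av, v⟩`, so `⟨tAv, v⟩ = -N |t|`,
while `‖tAv‖ ‖v‖ = |t| (N + 1)`. The quotient at `v / ‖v‖` is therefore `-1 + 1 / (N + 1)`.
-/

open scoped ENNReal ComplexConjugate InnerProductSpace

theorem lp.norm_eq_of_apply_eq_comp {α β E : Type*} [NormedAddCommGroup E] {p : ℝ≥0∞}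
    (hp : 0 < p.toReal) (e : β ≃ α) {x : lp (fun _ : α => E) p} {y : lp (fun _ : β => E) p}
    (h : ∀ i, y i = x (e i)) : ‖y‖ = ‖x‖ := by
  rw [lp.norm_eq_tsum_rpow hp, lp.norm_eq_tsum_rpow hp, ← e.tsum_eq]
  simp only [h]

section ComplexInnerProductSpace

variable {E : Type*} [NormedAddCommGroup E] [InnerProductSpace ℂ E]

theorem neg_norm_le_re_inner_div_norm (y x : E) : -‖x‖ ≤ (⟪y, x⟫_ℂ).re / ‖y‖ := by
  rcases (norm_nonneg y).eq_or_lt with hy | hy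
  · rw [← hy, div_zero, neg_nonpos]
    exact norm_nonneg x
  · rw [le_div_iff₀ hy]
    have := (Complex.abs_re_le_norm ⟪y, x⟫_ℂ).trans (norm_inner_le_norm y x)
    linarith [neg_abs_le (⟪y, x⟫_ℂ).re]

theorem exists_norm_eq_one_re_inner_div_norm_eq (T : E →L[ℂ] E) {v : E} (hv : v ≠ 0) :
    ∃ x : E, ‖x‖ = 1 ∧ (⟪T x, x⟫_ℂ).re / ‖T x‖ = (⟪T v, v⟫_ℂ).re / (‖T v‖ * ‖v‖) := by
  have hv' : 0 < ‖v‖ := norm_pos_iff.mpr hv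
  refine ⟨(‖v‖⁻¹ : ℂ) • v, norm_smul_inv_norm hv, ?_⟩
  rw [map_smul, inner_smul_left, inner_smul_right, norm_smul, ← Complex.ofReal_inv,
    Complex.conj_ofReal, Complex.norm_real, Real.norm_of_nonneg (inv_nonneg.mpr hv'.le),
    ← mul_assoc, ← Complex.ofReal_mul, Complex.re_ofReal_mul]
  field_simp

end ComplexInnerProductSpace

noncomputable def geomBlock (ω : ℂ) (N : ℕ) : ℤ → ℂ :=
  Set.indicator (Set.Ico 0 N) (ω ^ ·)

theorem memℓp_geomBlock (ω : ℂ) (N : ℕ) (p : ℝ≥0∞) : Memℓp (geomBlock ω N) p :=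
  (memℓp_zero <| (Set.finite_Ico (0 : ℤ) N).subset
    fun _ => Set.mem_of_indicator_ne_zero).of_exponent_ge bot_le

theorem conj_geomBlock_sub_mul_geomBlock {ω : ℂ} (hω : ‖ω‖ = 1) (k N : ℕ) (n : ℤ) :
    conj (geomBlock ω N (n - k)) * geomBlock ω N n =
      Set.indicator (Set.Ico (k : ℤ) N) (fun _ => ω ^ k) n := by
  unfold geomBlock
  by_cases hn : n ∈ Set.Ico (k : ℤ) N
  · have h₁ : n - k ∈ Set.Ico (0 : ℤ) N := by simp only [Set.mem_Ico] at hn ⊢; omega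
    have h₂ : n ∈ Set.Ico (0 : ℤ) N := by simp only [Set.mem_Ico] at hn ⊢; omega
    have hω₀ : ω ≠ 0 := norm_ne_zero_iff.mp (by rw [hω]; exact one_ne_zero)
    rw [Set.indicator_of_mem h₁, Set.indicator_of_mem h₂, Set.indicator_of_mem hn,
      ← sub_add_cancel n k, zpow_add₀ hω₀, add_sub_cancel_right, ← mul_assoc, Complex.conj_mul',
      norm_zpow, hω, one_zpow, zpow_natCast]
    simp
  · rw [Set.indicator_of_notMem hn]
    rcases not_and_or.mp (Set.mem_Ico.not.mp hn) with hn | hn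
    · rw [Set.indicator_of_notMem (by simp only [Set.mem_Ico]; omega), map_zero, zero_mul]
    · have : n ∉ Set.Ico (0 : ℤ) N := by simp only [Set.mem_Ico]; omega
      rw [Set.indicator_of_notMem this, mul_zero]

theorem tsum_conj_geomBlock_sub_mul_geomBlock {ω : ℂ} (hω : ‖ω‖ = 1) {k N : ℕ} (hk : k ≤ N) :
    ∑' n : ℤ, conj (geomBlock ω N (n - k)) * geomBlock ω N n = (N - k : ℕ) * ω ^ k := by
  simp_rw [conj_geomBlock_sub_mul_geomBlock hω, ← Finset.coe_Ico, ← sum_eq_tsum_indicator,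
    Finset.sum_const, Int.card_Ico, nsmul_eq_mul]
  congr 2
  omega

local notation "ℓ²(ℤ)" => lp (fun _ : ℤ => ℂ) 2

noncomputable def geomBlockLp (ω : ℂ) (N : ℕ) : ℓ²(ℤ) :=
  ⟨geomBlock ω N, memℓp_geomBlock ω N 2⟩

@[simp]
theorem coe_geomBlockLp (ω : ℂ) (N : ℕ) : ⇑(geomBlockLp ω N) = geomBlock ω N :=
  rfl

theorem norm_geomBlockLp_sq {ω : ℂ} (hω : ‖ω‖ = 1) (N : ℕ) : ‖geomBlockLp ω N‖ ^ 2 = N := by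
  have := tsum_conj_geomBlock_sub_mul_geomBlock hω (Nat.zero_le N)
  simp only [Nat.cast_zero, sub_zero, Nat.sub_zero, pow_zero, mul_one] at this
  rw [@norm_sq_eq_re_inner ℂ, lp.inner_eq_tsum]
  simp only [RCLike.inner_apply', coe_geomBlockLp, this, RCLike.re_to_complex, Complex.natCast_re]

section BilateralShift

variable {A : ℓ²(ℤ) →L[ℂ] ℓ²(ℤ)}

theorem norm_shift_apply (hA : ∀ (x : ℓ²(ℤ)) (n : ℤ), (A x : ∀ _ : ℤ, ℂ) n = x (n - 1))
    (x : ℓ²(ℤ)) : ‖A x‖ = ‖x‖ :=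
  lp.norm_eq_of_apply_eq_comp (by norm_num) (Equiv.subRight 1) (hA x)

theorem inner_shift_geomBlockLp (hA : ∀ (x : ℓ²(ℤ)) (n : ℤ), (A x : ∀ _ : ℤ, ℂ) n = x (n - 1))
    {ω : ℂ} (hω : ‖ω‖ = 1) (N : ℕ) :
    ⟪A (geomBlockLp ω (N + 1)), geomBlockLp ω (N + 1)⟫_ℂ = N * ω := by
  have := tsum_conj_geomBlock_sub_mul_geomBlock hω (Nat.le_add_left 1 N)
  rw [lp.inner_eq_tsum]
  simp only [RCLike.inner_apply', hA, coe_geomBlockLp]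
  simpa using this

theorem exists_norm_eq_one_re_inner_smul_shift_div_eq
    (hA : ∀ (x : ℓ²(ℤ)) (n : ℤ), (A x : ∀ _ : ℤ, ℂ) n = x (n - 1)) {t : ℂ} (ht : t ≠ 0) (N : ℕ) :
    ∃ x : ℓ²(ℤ), ‖x‖ = 1 ∧ (⟪(t • A) x, x⟫_ℂ).re / ‖(t • A) x‖ = -1 + 1 / (N + 1) := by
  have ht' : 0 < ‖t‖ := norm_pos_iff.mpr ht
  have hω : ‖-(t / ‖t‖)‖ = 1 := by
    rw [norm_neg, norm_div, Complex.norm_real, norm_norm, div_self ht'.ne']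
  set v := geomBlockLp (-(t / ‖t‖)) (N + 1)
  have hv_sq : ‖v‖ ^ 2 = N + 1 := by
    rw [norm_geomBlockLp_sq hω]
    push_cast
    ring
  have hv : v ≠ 0 := fun h => by
    rw [h, norm_zero] at hv_sq
    linarith
  have h_inner : ⟪(t • A) v, v⟫_ℂ = -(N * ‖t‖ : ℝ) := by
    rw [smul_apply, inner_smul_left, inner_shift_geomBlockLp hA hω,
      ← mul_assoc, mul_comm _ (N : ℂ), mul_assoc, mul_neg, mul_div_assoc', Complex.conj_mul']
    field_simp
    push_cast
    ring
  have h_norm : ‖(t • A) v‖ * ‖v‖ = ‖t‖ * (N + 1) := by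
    rw [smul_apply, norm_smul, norm_shift_apply hA, mul_assoc, ← sq, hv_sq]
  obtain ⟨x, hx, hx_eq⟩ := exists_norm_eq_one_re_inner_div_norm_eq (t • A) hv
  refine ⟨x, hx, ?_⟩
  rw [hx_eq, h_inner, h_norm, Complex.neg_re, Complex.ofReal_re]
  field_simp
  ring

end BilateralShift

/-- For the bilateral shift `A` on `ℓ²(ℤ)` and every `t ≠ 0`, the cosine of `tA` equals
`-1`, i.e. `φ(tA) = π`. -/
theorem bilateral_shift_angle_eq_pi
    (A : lp (fun _ : ℤ => ℂ) 2 →L[ℂ] lp (fun _ : ℤ => ℂ) 2)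
    (hA : ∀ (x : lp (fun _ : ℤ => ℂ) 2) (n : ℤ), (A x : ∀ _ : ℤ, ℂ) n = x (n - 1))
    (t : ℂ) (ht : t ≠ 0) :
    sInf {r : ℝ | ∃ x : lp (fun _ : ℤ => ℂ) 2, ‖x‖ = 1 ∧
      r = (inner ℂ (t • A x) x : ℂ).re / ‖t • A x‖} = -1 := by
  set S := {r : ℝ | ∃ x : lp (fun _ : ℤ => ℂ) 2, ‖x‖ = 1 ∧
      r = (inner ℂ (t • A x) x : ℂ).re / ‖t • A x‖}
  have h_lower : ∀ r ∈ S, -1 ≤ r := by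
    rintro r ⟨x, hx, rfl⟩
    simpa [hx] using neg_norm_le_re_inner_div_norm (t • A x) x
  have h_mem (N : ℕ) : -1 + 1 / ((N : ℝ) + 1) ∈ S :=
    have ⟨x, hx, h⟩ := exists_norm_eq_one_re_inner_smul_shift_div_eq hA ht N
    ⟨x, hx, h.symm⟩
  have h_tendsto :
      Filter.Tendsto (fun N : ℕ => -1 + 1 / ((N : ℝ) + 1)) Filter.atTop (nhds (-1)) := by
    simpa using tendsto_one_div_add_atTop_nhds_zero_nat.const_add (-1 : ℝ)
  exact le_antisymm
    (ge_of_tendsto h_tendsto (.of_forall fun N => csInf_le ⟨-1, h_lower⟩ (h_mem N)))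
    (le_csInf ⟨_, h_mem 0⟩ h_lower)
end

section
/- Let A be a bounded linear operator on a complex Banach space X with 0 ∈ ∂ co̅ V(A), the boundary of the closed convex hull of the spatial numerical range of A. Then α(A) ≤ 1, i.e., N(A²) = N(A). -/
open NormedSpace

/-! At a boundary point of a closed convex subset of the plane there is a supporting line, so
after a rotation `t ≠ 0` the operator `B = t • A` has numerical range in the closed right half
plane. Testing `y + s • B y` against a norming functional of `y` gives `‖y‖ ≤ ‖y + s • B y‖` for
all `s ≥ 0`. If `B (B y) = 0`, apply this to `y - s • B y`, which `B` maps to `B y`: it gives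
`s * ‖B y‖ ≤ 2 * ‖y‖` for every `s ≥ 0`, hence `B y = 0`. -/

theorem Convex.exists_dual_ne_zero_nonpos_of_zero_notMem_interior
    {E : Type*} [NormedAddCommGroup E] [NormedSpace ℝ E] [FiniteDimensional ℝ E] {S : Set E}
    (hS : Convex ℝ S) (h0S : (0 : E) ∈ S) (h0 : (0 : E) ∉ interior S) :
    ∃ f : Module.Dual ℝ E, f ≠ 0 ∧ ∀ z ∈ S, f z ≤ 0 := by
  by_cases hint : (interior S).Nonempty
  · obtain ⟨f, hf, hfS⟩ := geometric_hahn_banach_of_nonempty_interior_point hS h0 hint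
    refine ⟨f, fun hf0 ↦ hf (ContinuousLinearMap.coe_injective hf0), fun z hz ↦ ?_⟩
    simpa using hfS z hz
  · have hspan : Submodule.span ℝ S < ⊤ := by
      refine lt_top_iff_ne_top.2 fun htop ↦ hint ?_
      rw [hS.interior_nonempty_iff_affineSpan_eq_top, ← AffineSubspace.coe_eq_univ_iff,
        ← Set.insert_eq_self.2 h0S, affineSpan_insert_zero, htop, Submodule.top_coe]
    obtain ⟨f, hf, hker⟩ := (Submodule.span ℝ S).exists_le_ker_of_lt_top hspan
    exact ⟨f, hf, fun z hz ↦ (hker (Submodule.subset_span hz)).le⟩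

theorem Complex.exists_eq_re_mul (f : Module.Dual ℝ ℂ) : ∃ t : ℂ, ∀ z, f z = (t * z).re := by
  refine ⟨f.extendRCLike 1, fun z ↦ ?_⟩
  rw [← Module.Dual.re_extendRCLike_apply (𝕜 := ℂ) f z, mul_comm, ← smul_eq_mul, ← map_smul,
    smul_eq_mul, mul_one]
  rfl

theorem Complex.exists_ne_zero_re_mul_nonneg_of_zero_mem_frontier {S : Set ℂ}
    (hS : Convex ℝ S) (hSc : IsClosed S) (h0 : (0 : ℂ) ∈ frontier S) :
    ∃ t : ℂ, t ≠ 0 ∧ ∀ z ∈ S, 0 ≤ (t * z).re := by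
  rw [hSc.frontier_eq] at h0
  obtain ⟨f, hf, hfS⟩ := hS.exists_dual_ne_zero_nonpos_of_zero_notMem_interior h0.1 h0.2
  obtain ⟨t, ht⟩ := Complex.exists_eq_re_mul f
  refine ⟨-t, fun ht0 ↦ hf (LinearMap.ext fun z ↦ ?_), fun z hz ↦ ?_⟩
  · simp [ht, neg_eq_zero.1 ht0]
  · simpa [ht, neg_mul] using hfS z hz

open RCLike

section NumericalRange

variable {𝕜 X : Type*} [RCLike 𝕜] [NormedAddCommGroup X] [NormedSpace 𝕜 X]

/-- The conditions on `f` say that `f` lies in the duality set `J(x)`. -/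
def spatialNumericalRange (A : X →L[𝕜] X) : Set 𝕜 :=
  {z | ∃ (x : X) (f : StrongDual 𝕜 X), ‖x‖ = 1 ∧ f x = (‖x‖ : 𝕜) ^ 2 ∧ ‖f‖ = ‖x‖ ∧ z = f (A x)}

theorem spatialNumericalRange_smul (c : 𝕜) (A : X →L[𝕜] X) :
    spatialNumericalRange (c • A) = (c * ·) '' spatialNumericalRange A := by
  ext z
  simp only [spatialNumericalRange, Set.mem_image, Set.mem_ofPred_eq,
    smul_apply, map_smul, smul_eq_mul]
  constructor
  · rintro ⟨x, f, hx, hfx, hf, rfl⟩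
    exact ⟨_, ⟨x, f, hx, hfx, hf, rfl⟩, rfl⟩
  · rintro ⟨_, ⟨x, f, hx, hfx, hf, rfl⟩, rfl⟩
    exact ⟨x, f, hx, hfx, hf, rfl⟩

theorem one_le_norm_add_smul_of_re_nonneg {A : X →L[𝕜] X}
    (hA : ∀ z ∈ spatialNumericalRange A, 0 ≤ re z) {x : X} (hx : ‖x‖ = 1) {s : ℝ} (hs : 0 ≤ s) :
    1 ≤ ‖x + (s : 𝕜) • A x‖ := by
  obtain ⟨g, hg, hgx⟩ := exists_dual_vector 𝕜 x (by simp [hx])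
  have hre : 0 ≤ re (g (A x)) := hA _ ⟨x, g, hx, by simp [hgx, hx], by rw [hg, hx], rfl⟩
  calc 1 ≤ re (g (x + (s : 𝕜) • A x)) := by
        simp only [map_add, map_smul, hgx, hx, smul_eq_mul, re_ofReal_mul, ofReal_one, one_re]
        linarith [mul_nonneg hs hre]
    _ ≤ ‖g (x + (s : 𝕜) • A x)‖ := re_le_norm _
    _ ≤ ‖x + (s : 𝕜) • A x‖ := by simpa [hg] using g.le_opNorm (x + (s : 𝕜) • A x)

theorem norm_le_norm_add_smul_of_re_nonneg {A : X →L[𝕜] X}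
    (hA : ∀ z ∈ spatialNumericalRange A, 0 ≤ re z) (y : X) {s : ℝ} (hs : 0 ≤ s) :
    ‖y‖ ≤ ‖y + (s : 𝕜) • A y‖ := by
  rcases eq_or_ne y 0 with rfl | hy
  · simp
  obtain ⟨r, x, hx, rfl⟩ : ∃ (r : ℝ) (x : X), ‖x‖ = 1 ∧ y = (r : 𝕜) • x :=
    ⟨‖y‖, (‖y‖⁻¹ : 𝕜) • y, by simp [norm_smul, hy], by simp [smul_smul, hy]⟩
  rw [map_smul, smul_comm, ← smul_add, norm_smul, norm_smul, hx]
  exact mul_le_mul_of_nonneg_left (one_le_norm_add_smul_of_re_nonneg hA hx hs) (norm_nonneg _)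

theorem ker_comp_self_eq_ker_of_norm_le_norm_add_smul (B : X →ₗ[𝕜] X)
    (hB : ∀ y : X, ∀ s : ℝ, 0 ≤ s → ‖y‖ ≤ ‖y + (s : 𝕜) • B y‖) :
    LinearMap.ker (B ∘ₗ B) = LinearMap.ker B := by
  refine le_antisymm (fun y hy ↦ ?_) (LinearMap.ker_le_ker_comp B B)
  rw [LinearMap.mem_ker, LinearMap.comp_apply] at hy
  rw [LinearMap.mem_ker, ← norm_le_zero_iff]
  have hbound : ∀ s : ℝ, 0 ≤ s → s * ‖B y‖ ≤ 2 * ‖y‖ := fun s hs ↦ by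
    have hshift := hB (y - (s : 𝕜) • B y) s hs
    rw [map_sub, map_smul, hy, smul_zero, sub_zero, sub_add_cancel] at hshift
    calc s * ‖B y‖ = ‖y - (y - (s : 𝕜) • B y)‖ := by simp [norm_smul, abs_of_nonneg hs]
      _ ≤ ‖y‖ + ‖y - (s : 𝕜) • B y‖ := norm_sub_le _ _
      _ ≤ 2 * ‖y‖ := by linarith
  by_contra! hpos
  have := hbound ((2 * ‖y‖ + 1) / ‖B y‖) (by positivity)
  rw [div_mul_cancel₀ _ hpos.ne'] at this
  linarith

end NumericalRange

theorem ascent_le_one_of_zero_mem_boundary_numerical_range_general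
    (X : Type*) [NormedAddCommGroup X] [NormedSpace ℂ X]
    (A : X →L[ℂ] X)
    (h : (0 : ℂ) ∈ frontier (closure (convexHull ℝ
      {z : ℂ | ∃ (x : X) (f : StrongDual ℂ X), ‖x‖ = 1 ∧ f x = (‖x‖ : ℂ) ^ 2 ∧ ‖f‖ = ‖x‖ ∧
        z = f (A x)}))) :
    LinearMap.ker (A ∘L A : X →ₗ[ℂ] X) = LinearMap.ker (A : X →ₗ[ℂ] X) := by
  obtain ⟨t, ht, hre⟩ := Complex.exists_ne_zero_re_mul_nonneg_of_zero_mem_frontier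
    (convex_convexHull ℝ _).closure isClosed_closure h
  have hacc : ∀ z ∈ spatialNumericalRange (t • A), 0 ≤ re z := by
    rw [spatialNumericalRange_smul]
    rintro _ ⟨w, hw, rfl⟩
    exact hre _ (subset_closure (subset_convexHull ℝ _ hw))
  have hker := ker_comp_self_eq_ker_of_norm_le_norm_add_smul ((t • A : X →L[ℂ] X) : X →ₗ[ℂ] X)
    fun y _ hs ↦ norm_le_norm_add_smul_of_re_nonneg hacc y hs
  rwa [ContinuousLinearMap.toLinearMap_smul, LinearMap.ker_smul _ _ ht, LinearMap.smul_comp,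
    LinearMap.comp_smul, smul_smul, LinearMap.ker_smul _ _ (mul_ne_zero ht ht)] at hker

/-- Nirschl–Schneider: if `0` lies in the boundary of the closed convex hull of the
spatial numerical range of `A`, then the ascent of `A` is at most `1`. -/
theorem ascent_le_one_of_zero_mem_boundary_numerical_range
    (X : Type*) [NormedAddCommGroup X] [NormedSpace ℂ X] [CompleteSpace X]
    (A : X →L[ℂ] X)
    (h : (0 : ℂ) ∈ frontier (closure (convexHull ℝ
      {z : ℂ | ∃ (x : X) (f : StrongDual ℂ X), ‖x‖ = 1 ∧ f x = (‖x‖ : ℂ) ^ 2 ∧ ‖f‖ = ‖x‖ ∧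
        z = f (A x)}))) :
    LinearMap.ker (A ∘L A : X →ₗ[ℂ] X) = LinearMap.ker (A : X →ₗ[ℂ] X) :=
  ascent_le_one_of_zero_mem_boundary_numerical_range_general X A h
end

section
/- Let X be a complex Hilbert space and A : X → X an injective bounded linear operator with closed range such that no negative real number lies in σ(A) (i.e., σ(A) ∩ R_π = ∅, where R_π = {t ∈ ℂ : t < 0 real}). Then cos A = inf{Re⟨Ax, x⟩/(‖Ax‖‖x‖) : x ≠ 0} > −1, i.e., φ(A) < π. -/
/-!
On the unit sphere, `‖A x‖` ranges over a compact interval `[c, M]` with `c > 0`, because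
an injective operator with closed range is bounded below. For `t = ‖A x‖ / ‖x‖` one computes
`‖A x + t x‖² = 2 (‖A x‖ / ‖x‖) (Re ⟪A x, x⟫ + ‖A x‖ ‖x‖)`, so the cosine of the angle between
`A x` and `x` is close to `-1` only if `‖(A + t) x‖` is small compared with `‖x‖`. Since `-t`
stays in the compact set `-[c, M]` of the resolvent set, the resolvent is uniformly bounded
there, and `A + t` is uniformly bounded below.
-/

open RCLike

namespace spectrum

variable {𝕜 A : Type*} [NontriviallyNormedField 𝕜] [NormedRing A] [NormedAlgebra 𝕜 A]
  [CompleteSpace A]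

theorem exists_pos_norm_resolvent_le_of_isCompact {a : A} {K : Set 𝕜} (hK : IsCompact K)
    (hKa : K ⊆ resolventSet 𝕜 a) : ∃ C > 0, ∀ z ∈ K, ‖resolvent a z‖ ≤ C := by
  have hcont : ContinuousOn (resolvent a) K := fun z hz ↦
    (hasDerivAt_resolvent_const_left (hKa hz)).continuousAt.continuousWithinAt
  obtain ⟨C, hC, hbound⟩ := (hK.image_of_continuousOn hcont).isBounded.exists_pos_norm_le
  exact ⟨C, hC, fun z hz ↦ hbound _ ⟨z, hz, rfl⟩⟩

end spectrum

section Operator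

variable {𝕜 E : Type*} [NontriviallyNormedField 𝕜] [NormedAddCommGroup E] [NormedSpace 𝕜 E]

theorem ContinuousLinearMap.exists_pos_mul_norm_le_of_injective_of_isClosed_range
    {F : Type*} [NormedAddCommGroup F] [NormedSpace 𝕜 F] [CompleteSpace E] [CompleteSpace F]
    (A : E →L[𝕜] F) (hinj : Function.Injective A) (hA : IsClosed (Set.range A)) :
    ∃ c > 0, ∀ x, c * ‖x‖ ≤ ‖A x‖ := by
  obtain ⟨K, hK⟩ := A.antilipschitz_of_injective_of_isClosed_range hinj hA
  refine ⟨((K : ℝ) + 1)⁻¹, by positivity, fun x ↦ ?_⟩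
  rw [inv_mul_le_iff₀ (by positivity)]
  exact (A.bound_of_antilipschitz hK x).trans (by gcongr; linarith)

theorem ContinuousLinearMap.norm_le_norm_resolvent_mul {A : E →L[𝕜] E} {z : 𝕜}
    (hz : z ∈ resolventSet 𝕜 A) (x : E) : ‖x‖ ≤ ‖resolvent A z‖ * ‖z • x - A x‖ := by
  have hinv : resolvent A z * (algebraMap 𝕜 (E →L[𝕜] E) z - A) = 1 :=
    Ring.inverse_mul_cancel _ hz
  calc ‖x‖ = ‖resolvent A z (z • x - A x)‖ := by
        simpa using congr(‖$hinv x‖).symm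
    _ ≤ ‖resolvent A z‖ * ‖z • x - A x‖ := (resolvent A z).le_opNorm _

variable [CompleteSpace E]

theorem ContinuousLinearMap.exists_pos_mul_norm_le_norm_smul_sub {A : E →L[𝕜] E} {K : Set 𝕜}
    (hK : IsCompact K) (hKA : K ⊆ resolventSet 𝕜 A) :
    ∃ δ > 0, ∀ z ∈ K, ∀ x, δ * ‖x‖ ≤ ‖z • x - A x‖ := by
  obtain ⟨C, hC, hbound⟩ := spectrum.exists_pos_norm_resolvent_le_of_isCompact hK hKA
  refine ⟨C⁻¹, inv_pos.2 hC, fun z hz x ↦ ?_⟩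
  rw [inv_mul_le_iff₀ hC]
  calc ‖x‖ ≤ ‖resolvent A z‖ * ‖z • x - A x‖ := A.norm_le_norm_resolvent_mul (hKA hz) x
    _ ≤ C * ‖z • x - A x‖ := by gcongr; exact hbound z hz

end Operator

section InnerProduct

variable {𝕜 E : Type*} [RCLike 𝕜] [NormedAddCommGroup E] [InnerProductSpace 𝕜 E]

theorem norm_add_div_norm_smul_sq (x y : E) (hx : x ≠ 0) :
    ‖y + ((‖y‖ / ‖x‖ : ℝ) : 𝕜) • x‖ ^ 2 =
      2 * (‖y‖ / ‖x‖) * (re (inner 𝕜 y x) + ‖y‖ * ‖x‖) := by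
  have hx' : ‖x‖ ≠ 0 := norm_ne_zero_iff.2 hx
  rw [norm_add_sq (𝕜 := 𝕜), inner_smul_real_right, norm_smul, norm_ofReal,
    abs_of_nonneg (by positivity), smul_re]
  field_simp
  ring

theorem neg_one_add_le_re_inner_div_norm_mul_norm {x y : E} (hx : x ≠ 0) (hy : y ≠ 0)
    {δ M : ℝ} (hδ₀ : 0 ≤ δ) (hM : ‖y‖ ≤ M * ‖x‖)
    (hδ : δ * ‖x‖ ≤ ‖y + ((‖y‖ / ‖x‖ : ℝ) : 𝕜) • x‖) :
    -1 + δ ^ 2 / (2 * M ^ 2) ≤ re (inner 𝕜 y x) / (‖y‖ * ‖x‖) := by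
  have hx' : 0 < ‖x‖ := norm_pos_iff.2 hx
  have hy' : 0 < ‖y‖ := norm_pos_iff.2 hy
  have hM₀ : 0 < M := pos_of_mul_pos_left (hy'.trans_le hM) hx'.le
  have hsq : (δ * ‖x‖) ^ 2 ≤ 2 * (‖y‖ / ‖x‖) * (re (inner 𝕜 y x) + ‖y‖ * ‖x‖) := by
    rw [← norm_add_div_norm_smul_sq x y hx]
    exact pow_le_pow_left₀ (by positivity) hδ 2
  have hM_sq : ‖y‖ ^ 2 ≤ (M * ‖x‖) ^ 2 := pow_le_pow_left₀ hy'.le hM 2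
  have key : δ ^ 2 / (2 * M ^ 2) ≤ (re (inner 𝕜 y x) + ‖y‖ * ‖x‖) / (‖y‖ * ‖x‖) := by
    calc δ ^ 2 / (2 * M ^ 2) = δ ^ 2 * ‖x‖ ^ 2 / (2 * (M * ‖x‖) ^ 2) := by
          field_simp
      _ ≤ δ ^ 2 * ‖x‖ ^ 2 / (2 * ‖y‖ ^ 2) := by gcongr
      _ = (δ * ‖x‖) ^ 2 / (2 * (‖y‖ / ‖x‖)) / (‖y‖ * ‖x‖) := by
          field_simp
      _ ≤ (re (inner 𝕜 y x) + ‖y‖ * ‖x‖) / (‖y‖ * ‖x‖) := by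
          gcongr
          rwa [div_le_iff₀' (by positivity)]
  rw [add_div, div_self (by positivity)] at key
  linarith

theorem ContinuousLinearMap.exists_pos_forall_neg_one_add_le_re_inner_div [CompleteSpace E]
    {A : E →L[𝕜] E} {c M : ℝ} (hc : 0 < c) (hM : 0 < M) (hlower : ∀ x, c * ‖x‖ ≤ ‖A x‖)
    (hupper : ∀ x, ‖A x‖ ≤ M * ‖x‖) (hres : ∀ t ∈ Set.Icc c M, -(t : 𝕜) ∈ resolventSet 𝕜 A) :
    ∃ ε > 0, ∀ x ≠ 0, -1 + ε ≤ re (inner 𝕜 (A x) x) / (‖A x‖ * ‖x‖) := by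
  obtain ⟨δ, hδ, hbelow⟩ := A.exists_pos_mul_norm_le_norm_smul_sub
    (isCompact_Icc.image (by fun_prop : Continuous fun t : ℝ ↦ -(t : 𝕜)))
    (by rintro _ ⟨t, ht, rfl⟩; exact hres t ht)
  refine ⟨δ ^ 2 / (2 * M ^ 2), by positivity, fun x hx ↦ ?_⟩
  have hx' : 0 < ‖x‖ := norm_pos_iff.2 hx
  have hAx : A x ≠ 0 := norm_pos_iff.1 ((mul_pos hc hx').trans_le (hlower x))
  have ht : ‖A x‖ / ‖x‖ ∈ Set.Icc c M :=
    ⟨(le_div_iff₀ hx').2 (hlower x), (div_le_iff₀ hx').2 (hupper x)⟩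
  refine neg_one_add_le_re_inner_div_norm_mul_norm hx hAx hδ.le (hupper x) ?_
  have h := hbelow _ ⟨_, ht, rfl⟩ x
  rwa [neg_smul, ← neg_add', norm_neg, add_comm] at h

end InnerProduct

/-- If `A` is injective with closed range on a Hilbert space and no negative real number
belongs to `σ(A)`, then `cos A > -1`, i.e. `φ(A) < π`. -/
theorem cos_gt_neg_one_of_spectrum_avoids_negative_ray
    (X : Type*) [NormedAddCommGroup X] [InnerProductSpace ℂ X] [CompleteSpace X]
    (A : X →L[ℂ] X) (hinj : Function.Injective A)
    (hR : IsClosed ((LinearMap.range (A : X →ₗ[ℂ] X) : Submodule ℂ X) : Set X))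
    (hspec : ∀ r : ℝ, r < 0 → (r : ℂ) ∉ spectrum ℂ A) :
    -1 < sInf {r : ℝ | ∃ x : X, x ≠ 0 ∧
      r = (inner ℂ (A x) x : ℂ).re / (‖A x‖ * ‖x‖)} := by
  obtain ⟨c, hc, hlower⟩ := A.exists_pos_mul_norm_le_of_injective_of_isClosed_range hinj
    (by simpa [LinearMap.coe_range] using hR)
  obtain ⟨ε, hε, hcos⟩ := A.exists_pos_forall_neg_one_add_le_re_inner_div hc
    (by positivity : 0 < ‖A‖ + 1) hlower (fun x ↦ (A.le_opNorm x).trans (by gcongr; linarith))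
    (fun t ht ↦ by simpa using not_not.1 (hspec (-t) (by linarith [ht.1])))
  rcases Set.eq_empty_or_nonempty {r : ℝ | ∃ x : X, x ≠ 0 ∧
      r = (inner ℂ (A x) x : ℂ).re / (‖A x‖ * ‖x‖)} with hS | hS
  · simp [hS]
  · have := le_csInf hS (by rintro _ ⟨x, hx, rfl⟩; exact hcos x hx)
    linarith
end

section
/- Let X be a complex Hilbert space and A : X → X a bounded linear operator with closed range such that R(A) ⊥ N(A). If there exists ω ∈ [0, 2π) such that σ(A) ∩ R_ω = ∅, where R_ω = {t ∈ ℂ \ {0} : arg t = ω}, then X = R(A) ⊕ N(A). -/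
/-!
Let `R = R(A)`. Since `R ⊥ N(A)`, `R` lies in `N(A)ᗮ`, on which `A` is injective with the same
closed range, so the restriction `B = A|_R : R → R` is bounded below, say `‖v‖ ≤ K ‖B v‖`.
For `λ ≠ 0` the resolvent of `A` maps `R` into itself (`λ x = y + A x`), so `λ ∉ σ(B)` along the
whole ray. Being bounded below gives `‖(λ - B)⁻¹‖ ≤ K / (1 - K |λ|)`, and for a point `λ` of the
ray with `2 K |λ| < 1` this makes `|λ| ‖(λ - B)⁻¹‖ < 1`, so `0 ∈ ρ(B)`. Thus `A` maps `R` onto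
`R`, which says `R + N(A) = X`; and `R ∩ N(A) = 0` because `R ⊥ N(A)`.
-/

open NNReal

namespace spectrum

variable {𝕜 A : Type*} [NormedField 𝕜] [NormedRing A] [NormedAlgebra 𝕜 A]
  [HasSummableGeomSeries A]

theorem mem_resolventSet_of_norm_sub_mul_norm_resolvent_lt_one {a : A} {μ ν : 𝕜}
    (hμ : μ ∈ resolventSet 𝕜 a) (h : ‖ν - μ‖ * ‖resolvent a μ‖ < 1) :
    ν ∈ resolventSet 𝕜 a := by
  set u := hμ.unit
  have hsmall : ‖(μ - ν) • (↑u⁻¹ : A)‖ < 1 := by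
    rw [← resolvent_eq hμ]
    exact (norm_smul_le _ _).trans_lt (by rwa [norm_sub_rev])
  have hfactor : algebraMap 𝕜 A ν - a = u * ↑(Units.oneSub _ hsmall) := by
    have hu : (u : A) = algebraMap 𝕜 A μ - a := hμ.unit_spec
    rw [Units.val_oneSub, mul_sub, mul_one, mul_smul_comm, Units.mul_inv, hu,
      Algebra.smul_def, mul_one, map_sub]
    abel
  rw [mem_resolventSet_iff, hfactor]
  exact (u * Units.oneSub _ hsmall).isUnit

end spectrum

namespace ContinuousLinearMap

section Banach

variable {𝕜 E : Type*} [NontriviallyNormedField 𝕜] [NormedAddCommGroup E] [NormedSpace 𝕜 E]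

theorem norm_resolvent_le_of_antilipschitzWith {B : E →L[𝕜] E} {K : ℝ≥0}
    (hB : AntilipschitzWith K B) {μ : 𝕜} (hμ : μ ∈ resolventSet 𝕜 B) (hKμ : K * ‖μ‖ < 1) :
    ‖resolvent B μ‖ ≤ K / (1 - K * ‖μ‖) := by
  have hpos : 0 < 1 - K * ‖μ‖ := by linarith
  refine opNorm_le_bound _ (by positivity) fun w ↦ ?_
  obtain ⟨u, hu⟩ := spectrum.mem_resolventSet_iff.mp hμ
  have hres : resolvent B μ = ↑u⁻¹ := by rw [resolvent, ← hu, Ring.inverse_unit]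
  set v := resolvent B μ w
  have hv : μ • v - B v = w := by
    have h := congr($(u.mul_inv) w)
    rw [hu, ← hres] at h
    simpa using h
  have hbound : ‖v‖ ≤ K * (‖w‖ + ‖μ‖ * ‖v‖) := calc
    ‖v‖ ≤ K * ‖B v‖ := hB.le_mul_norm (map_zero B) v
    _ = K * ‖μ • v - w‖ := by rw [← hv, sub_sub_cancel]
    _ ≤ K * (‖w‖ + ‖μ‖ * ‖v‖) := by
      gcongr
      rw [← norm_smul]
      exact (norm_sub_le _ _).trans_eq (add_comm _ _)
  rw [div_mul_eq_mul_div, le_div_iff₀ hpos]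
  nlinarith

theorem isUnit_of_antilipschitzWith_of_notMem_spectrum [CompleteSpace E] {B : E →L[𝕜] E}
    {K : ℝ≥0} (hB : AntilipschitzWith K B) {μ : 𝕜} (hμ : μ ∉ spectrum 𝕜 B)
    (hKμ : 2 * K * ‖μ‖ < 1) : IsUnit B := by
  have hpos : 0 < 1 - K * ‖μ‖ := by nlinarith [norm_nonneg μ, K.coe_nonneg]
  replace hμ : μ ∈ resolventSet 𝕜 B := spectrum.notMem_iff.mp hμ
  have hres := norm_resolvent_le_of_antilipschitzWith hB hμ (by linarith)
  have h0 : (0 : 𝕜) ∈ resolventSet 𝕜 B := by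
    refine spectrum.mem_resolventSet_of_norm_sub_mul_norm_resolvent_lt_one hμ ?_
    calc ‖0 - μ‖ * ‖resolvent B μ‖ ≤ ‖μ‖ * (K / (1 - K * ‖μ‖)) := by
          rw [zero_sub, norm_neg]; gcongr
      _ < 1 := by rw [mul_div_assoc', div_lt_one hpos]; linarith
  simpa using spectrum.mem_resolventSet_iff.mp h0

noncomputable abbrev restrictRange (A : E →L[𝕜] E) :
    LinearMap.range (A : E →ₗ[𝕜] E) →L[𝕜] LinearMap.range (A : E →ₗ[𝕜] E) :=
  A.restrict fun x _ ↦ LinearMap.mem_range_self (A : E →ₗ[𝕜] E) x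

theorem notMem_spectrum_restrictRange {A : E →L[𝕜] E} {μ : 𝕜} (hμ0 : μ ≠ 0)
    (hμ : μ ∉ spectrum 𝕜 A) : μ ∉ spectrum 𝕜 A.restrictRange := by
  obtain ⟨u, hu⟩ := spectrum.notMem_iff.mp hμ
  have hmaps : ∀ y ∈ LinearMap.range (A : E →ₗ[𝕜] E),
      (↑u⁻¹ : E →L[𝕜] E) y ∈ LinearMap.range (A : E →ₗ[𝕜] E) := by
    intro y hy
    set x := (↑u⁻¹ : E →L[𝕜] E) y
    have hx : μ • x = y + A x := by
      have h : μ • x - A x = y := by simpa [hu] using congr($(u.mul_inv) y)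
      rw [← h, sub_add_cancel]
    have : x = μ⁻¹ • (y + A x) := by rw [← hx, inv_smul_smul₀ hμ0]
    rw [this]
    exact Submodule.smul_mem _ _ (Submodule.add_mem _ hy (LinearMap.mem_range_self _ x))
  rw [spectrum.notMem_iff, ← spectrum.mem_resolventSet_iff]
  apply spectrum.mem_resolventSet_of_left_right_inverse
    (b := (↑u⁻¹ : E →L[𝕜] E).restrict hmaps) (c := (↑u⁻¹ : E →L[𝕜] E).restrict hmaps)
  · ext v
    simpa [hu] using congr($(u.mul_inv) v)
  · ext v
    simpa [hu] using congr($(u.inv_mul) v)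

theorem codisjoint_range_ker_of_surjective_restrictRange {A : E →L[𝕜] E}
    (h : Function.Surjective A.restrictRange) :
    Codisjoint (LinearMap.range (A : E →ₗ[𝕜] E)) (LinearMap.ker (A : E →ₗ[𝕜] E)) := by
  refine Submodule.map_eq_range_iff.mp (le_antisymm LinearMap.map_le_range ?_)
  rintro _ ⟨x, rfl⟩
  obtain ⟨y, hy⟩ := h ⟨A x, LinearMap.mem_range_self _ x⟩
  exact ⟨y, y.2, congrArg Subtype.val hy⟩

end Banach

section Hilbert

variable {𝕜 E F : Type*} [RCLike 𝕜] [NormedAddCommGroup E] [InnerProductSpace 𝕜 E]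
  [CompleteSpace E] [NormedAddCommGroup F] [NormedSpace 𝕜 F] [CompleteSpace F]

theorem exists_antilipschitzWith_domRestrict_orthogonal_ker (A : E →L[𝕜] F)
    (hA : IsClosed (LinearMap.range (A : E →ₗ[𝕜] F) : Set F)) :
    ∃ K, AntilipschitzWith K (A.domRestrict (LinearMap.ker (A : E →ₗ[𝕜] F))ᗮ) := by
  have : CompleteSpace (LinearMap.ker (A : E →ₗ[𝕜] F)) := A.isClosed_ker.completeSpace_coe
  apply antilipschitz_of_injective_of_isClosed_range
  · refine (injective_iff_map_eq_zero _).mpr fun v hv ↦ Subtype.ext ?_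
    exact Submodule.disjoint_def.mp (Submodule.orthogonal_disjoint _) _ hv v.2
  · have hmap := Submodule.map_eq_range_iff.mpr
      (Submodule.isCompl_orthogonal (LinearMap.ker (A : E →ₗ[𝕜] F))).codisjoint.symm
    have hrange : Set.range (A.domRestrict (LinearMap.ker (A : E →ₗ[𝕜] F))ᗮ) =
        Submodule.map (A : E →ₗ[𝕜] F) (LinearMap.ker (A : E →ₗ[𝕜] F))ᗮ := by
      ext; simp
    rwa [hrange, hmap]

theorem exists_antilipschitzWith_restrictRange (A : E →L[𝕜] E)
    (hA : IsClosed (LinearMap.range (A : E →ₗ[𝕜] E) : Set E))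
    (hperp : LinearMap.range (A : E →ₗ[𝕜] E) ≤ (LinearMap.ker (A : E →ₗ[𝕜] E))ᗮ) :
    ∃ K, AntilipschitzWith K A.restrictRange := by
  obtain ⟨K, hK⟩ := A.exists_antilipschitzWith_domRestrict_orthogonal_ker hA
  exact ⟨K, A.restrictRange.antilipschitz_of_bound fun v ↦
    hK.le_mul_norm (map_zero _) ⟨v, hperp v.2⟩⟩

end Hilbert

end ContinuousLinearMap

/-- If `A` has closed range, `R(A) ⊥ N(A)`, and the spectrum of `A` misses some ray
emanating from the origin, then `X = R(A) ⊕ N(A)`. -/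
theorem range_ker_complementary_of_spectrum_avoids_ray
    (X : Type*) [NormedAddCommGroup X] [InnerProductSpace ℂ X] [CompleteSpace X]
    (A : X →L[ℂ] X)
    (hR : IsClosed ((LinearMap.range (A : X →ₗ[ℂ] X) : Submodule ℂ X) : Set X))
    (hperp : ∀ x : X, ∀ y ∈ LinearMap.ker (A : X →ₗ[ℂ] X), (inner ℂ (A x) y : ℂ) = 0)
    (hspec : ∃ ω ∈ Set.Ico (0 : ℝ) (2 * Real.pi),
      ∀ r : ℝ, 0 < r → (r : ℂ) * Complex.exp (ω * Complex.I) ∉ spectrum ℂ A) :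
    LinearMap.range (A : X →ₗ[ℂ] X) ⊔ LinearMap.ker (A : X →ₗ[ℂ] X) = ⊤ ∧
    LinearMap.range (A : X →ₗ[ℂ] X) ⊓ LinearMap.ker (A : X →ₗ[ℂ] X) = ⊥ := by
  obtain ⟨ω, -, hray⟩ := hspec
  have hR_le : LinearMap.range (A : X →ₗ[ℂ] X) ≤ (LinearMap.ker (A : X →ₗ[ℂ] X))ᗮ := by
    rintro _ ⟨x, rfl⟩
    exact (Submodule.mem_orthogonal' _ _).mpr (hperp x)
  obtain ⟨K, hK⟩ := A.exists_antilipschitzWith_restrictRange hR hR_le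
  have : CompleteSpace (LinearMap.range (A : X →ₗ[ℂ] X)) := hR.completeSpace_coe
  set r : ℝ := (2 * K + 1)⁻¹
  have hr : 0 < r := by positivity
  have hnorm : ‖(r : ℂ) * Complex.exp (ω * Complex.I)‖ = r := by
    rw [norm_mul, Complex.norm_exp_ofReal_mul_I, mul_one, Complex.norm_real,
      Real.norm_of_nonneg hr.le]
  have hunit : IsUnit A.restrictRange := by
    refine A.restrictRange.isUnit_of_antilipschitzWith_of_notMem_spectrum hK
      (A.notMem_spectrum_restrictRange ?_ (hray r hr)) ?_
    · rw [← norm_ne_zero_iff, hnorm]; exact hr.ne'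
    · rw [hnorm, ← div_eq_mul_inv, div_lt_one (by positivity)]; linarith
  refine ⟨codisjoint_iff.mp ?_, disjoint_iff.mp ?_⟩
  · exact A.codisjoint_range_ker_of_surjective_restrictRange
      (ContinuousLinearMap.isUnit_iff_bijective.mp hunit).2
  · exact (Submodule.orthogonal_disjoint _).symm.mono_left hR_le
end

section
/- Let X be a complex Hilbert space and A : X → X a bounded linear operator with closed range such that σ(A) ∩ R_ω = ∅ for some ray R_ω emanating from the origin. Then A is surjective if and only if A is injective. -/
/-!
If `T` is bounded below, `c * ‖x‖ ≤ ‖T x‖`, and `z` is a point of the resolvent set with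
`‖z‖ < c / 2`, then `‖(z - T)⁻¹‖ ≤ (c - ‖z‖)⁻¹ < ‖z‖⁻¹`, so `-T = (z - T) - z` is a unit by the
Neumann series. Hence a bounded-below operator is invertible as soon as `0` lies in the closure of
its resolvent set, which is the case when the spectrum misses a ray from `0`. Injectivity with
closed range makes `A` bounded below; surjectivity makes `A†` bounded below (open mapping theorem),
and the resolvent set of `A†` is the conjugate of that of `A`. Either way `A` is invertible.
-/

open ContinuousLinearMap Complex

section BoundedBelow

variable {𝕜 X : Type*} [NontriviallyNormedField 𝕜] [NormedAddCommGroup X] [NormedSpace 𝕜 X]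

lemma ContinuousLinearMap.norm_units_inv_le_of_mul_norm_le (u : (X →L[𝕜] X)ˣ) {c : ℝ}
    (hc : 0 < c) (hu : ∀ x, c * ‖x‖ ≤ ‖(u : X →L[𝕜] X) x‖) :
    ‖(↑u⁻¹ : X →L[𝕜] X)‖ ≤ c⁻¹ := by
  refine opNorm_le_bound _ (inv_nonneg.mpr hc.le) fun y ↦ ?_
  have h := hu ((↑u⁻¹ : X →L[𝕜] X) y)
  rw [← mul_apply_eq_comp, u.mul_inv, one_apply_eq_self] at h
  rwa [inv_mul_eq_div, le_div_iff₀' hc]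

variable [CompleteSpace X]

theorem ContinuousLinearMap.isUnit_of_mul_norm_le_of_zero_mem_closure_resolventSet
    {T : X →L[𝕜] X} {c : ℝ} (hc : 0 < c) (hT : ∀ x, c * ‖x‖ ≤ ‖T x‖)
    (h0 : (0 : 𝕜) ∈ closure (resolventSet 𝕜 T)) : IsUnit T := by
  nontriviality X
  obtain ⟨z, hz, hzc⟩ := Metric.mem_closure_iff.mp h0 (c / 2) (half_pos hc)
  rw [dist_zero_left] at hzc
  obtain ⟨u, hu⟩ := spectrum.mem_resolventSet_iff.mp hz
  have hu_bound : ∀ x, (c - ‖z‖) * ‖x‖ ≤ ‖(u : X →L[𝕜] X) x‖ := fun x ↦ by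
    have h := norm_le_norm_add_norm_sub' (T x) (z • x)
    rw [norm_sub_rev, norm_smul] at h
    simp only [hu, Algebra.algebraMap_eq_smul_one, sub_apply, smul_apply, one_apply_eq_self]
    linarith [hT x]
  have hinv := norm_units_inv_le_of_mul_norm_le u (by linarith) hu_bound
  have hnear : ‖-T - (u : X →L[𝕜] X)‖ < ‖(↑u⁻¹ : X →L[𝕜] X)‖⁻¹ := calc
    ‖-T - (u : X →L[𝕜] X)‖ = ‖z‖ := by
      rw [hu, show -T - (algebraMap 𝕜 _ z - T) = -algebraMap 𝕜 _ z by abel, norm_neg,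
        norm_algebraMap']
    _ < c - ‖z‖ := by linarith
    _ ≤ ‖(↑u⁻¹ : X →L[𝕜] X)‖⁻¹ := (le_inv_comm₀ (by linarith) (Units.norm_pos _)).mpr hinv
  simpa using (u.ofNearby (-T) hnear).isUnit.neg

end BoundedBelow

lemma spectrum.zero_mem_closure_resolventSet_of_forall_notMem_ray {A : Type*} [Ring A]
    [Algebra ℂ A] {a : A} {ω : ℝ}
    (h : ∀ r : ℝ, 0 < r → (r : ℂ) * exp (ω * I) ∉ spectrum ℂ a) :
    (0 : ℂ) ∈ closure (resolventSet ℂ a) := by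
  refine Metric.mem_closure_iff.mpr fun ε hε ↦ ⟨(ε / 2 : ℝ) * exp (ω * I),
    Set.notMem_compl_iff.mp (h _ (half_pos hε)), ?_⟩
  rw [dist_zero_left, norm_mul, norm_exp_ofReal_mul_I, mul_one, norm_real,
    Real.norm_of_nonneg (by positivity)]
  linarith

lemma spectrum.zero_mem_closure_resolventSet_star {𝕜 A : Type*} [NormedField 𝕜] [StarRing 𝕜]
    [ContinuousStar 𝕜] [Ring A] [StarRing A] [Algebra 𝕜 A] [StarModule 𝕜 A] {a : A}
    (h : (0 : 𝕜) ∈ closure (resolventSet 𝕜 a)) :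
    (0 : 𝕜) ∈ closure (resolventSet 𝕜 (star a)) := by
  simpa using map_mem_closure continuous_star h fun z hz ↦
    star_mem_resolventSet_iff.mp (by rwa [star_star])

lemma ContinuousLinearMap.exists_mul_norm_le_adjoint_apply_of_surjective {𝕜 E F : Type*}
    [RCLike 𝕜] [NormedAddCommGroup E] [InnerProductSpace 𝕜 E] [CompleteSpace E]
    [NormedAddCommGroup F] [InnerProductSpace 𝕜 F] [CompleteSpace F]
    {A : E →L[𝕜] F} (hA : Function.Surjective A) :
    ∃ c > 0, ∀ y, c * ‖y‖ ≤ ‖adjoint A y‖ := by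
  obtain ⟨C, hC, hpre⟩ := A.exists_preimage_norm_le hA
  refine ⟨C⁻¹, inv_pos.mpr hC, fun y ↦ ?_⟩
  obtain ⟨x, rfl, hx⟩ := hpre y
  have hsq : ‖A x‖ * ‖A x‖ ≤ ‖adjoint A (A x)‖ * (C * ‖A x‖) := calc
    ‖A x‖ * ‖A x‖ = RCLike.re (inner 𝕜 (adjoint A (A x)) x) := by
      rw [adjoint_inner_left, inner_self_eq_norm_mul_norm]
    _ ≤ ‖adjoint A (A x)‖ * ‖x‖ := (RCLike.re_le_norm _).trans (norm_inner_le_norm _ _)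
    _ ≤ ‖adjoint A (A x)‖ * (C * ‖A x‖) := by gcongr
  rw [inv_mul_le_iff₀ hC]
  rcases (norm_nonneg (A x)).eq_or_lt with h0 | hpos
  · rw [← h0]; positivity
  · nlinarith [hsq]

/-- If `A` has closed range on a Hilbert space and its spectrum misses some ray
emanating from the origin, then `A` is surjective iff it is injective. -/
theorem surjective_iff_injective_of_spectrum_avoids_ray
    (X : Type*) [NormedAddCommGroup X] [InnerProductSpace ℂ X] [CompleteSpace X]
    (A : X →L[ℂ] X)
    (hR : IsClosed ((LinearMap.range (A : X →ₗ[ℂ] X) : Submodule ℂ X) : Set X))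
    (hspec : ∃ ω ∈ Set.Ico (0 : ℝ) (2 * Real.pi),
      ∀ r : ℝ, 0 < r → (r : ℂ) * Complex.exp (ω * Complex.I) ∉ spectrum ℂ A) :
    Function.Surjective A ↔ Function.Injective A := by
  obtain ⟨ω, -, hray⟩ := hspec
  have h0 := spectrum.zero_mem_closure_resolventSet_of_forall_notMem_ray hray
  constructor
  · intro hsurj
    obtain ⟨c, hc, hbound⟩ := exists_mul_norm_le_adjoint_apply_of_surjective hsurj
    have hunit : IsUnit (adjoint A) := isUnit_of_mul_norm_le_of_zero_mem_closure_resolventSet hc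
      hbound (by simpa [star_eq_adjoint] using spectrum.zero_mem_closure_resolventSet_star h0)
    rw [← star_eq_adjoint, isUnit_star, isUnit_iff_bijective] at hunit
    exact hunit.injective
  · intro hinj
    obtain ⟨c, hc, hbound⟩ := antilipschitzWith_iff_exists_mul_le_norm.mp
      (A.antilipschitz_of_injective_of_isClosed_range hinj
        (by rwa [LinearMap.coe_range, coe_coe] at hR))
    exact (isUnit_iff_bijective.mp
      (isUnit_of_mul_norm_le_of_zero_mem_closure_resolventSet hc hbound h0)).surjective
end

section
/- Let X be a Banach space and M, N closed subspaces with M ⊄ N and M ∩ N = {0}. Then γ(M, N) = inf{dist(x, N)/‖x‖ : 0 ≠ x ∈ M}, and γ(M, N) > 0 if and only if M + N is closed. -/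
/-! When `M ∩ N = 0` the denominator `dist(x, M ∩ N)` is just `‖x‖`, which gives the formula
for `γ(M, N)`. Then `γ(M, N) > 0` means `c‖m‖ ≤ ‖m + n‖` for `m ∈ M`, `n ∈ N`, i.e. that the
injective addition map `M × N → X`, whose range is `M + N`, is antilipschitz; by the open mapping
theorem an injective operator between Banach spaces is antilipschitz iff its range is closed. -/

open Metric

theorem le_csInf_div_norm_iff {E : Type*} [NormedAddGroup E] {s : Set E} {f : E → ℝ}
    (hf : ∀ x ∈ s, 0 ≤ f x) (hs : ∃ x ∈ s, x ≠ 0) {c : ℝ} :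
    c ≤ sInf {r : ℝ | ∃ x ∈ s, x ≠ 0 ∧ r = f x / ‖x‖} ↔ ∀ x ∈ s, c * ‖x‖ ≤ f x := by
  have hbdd : BddBelow {r : ℝ | ∃ x ∈ s, x ≠ 0 ∧ r = f x / ‖x‖} := by
    refine ⟨0, ?_⟩
    rintro r ⟨x, hx, -, rfl⟩
    exact div_nonneg (hf x hx) (norm_nonneg x)
  obtain ⟨x₀, hx₀, hx₀0⟩ := hs
  constructor
  · intro hc x hx
    rcases eq_or_ne x 0 with rfl | hx0
    · simpa using hf 0 hx
    · rw [← le_div_iff₀ (norm_pos_iff.2 hx0)]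
      exact hc.trans (csInf_le hbdd ⟨x, hx, hx0, rfl⟩)
  · intro h
    refine le_csInf ⟨_, x₀, hx₀, hx₀0, rfl⟩ ?_
    rintro r ⟨x, hx, hx0, rfl⟩
    rw [le_div_iff₀ (norm_pos_iff.2 hx0)]
    exact h x hx

namespace Submodule

variable {𝕜 X : Type*} [NontriviallyNormedField 𝕜] [NormedAddCommGroup X] [NormedSpace 𝕜 X]
variable (M N : Submodule 𝕜 X)

theorem range_coprod_subtypeL :
    Set.range (M.subtypeL.coprod N.subtypeL) = ((M ⊔ N : Submodule 𝕜 X) : Set X) := by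
  ext x
  simp [mem_sup, eq_comm]

theorem injective_coprod_subtypeL (h : M ⊓ N = ⊥) :
    Function.Injective (M.subtypeL.coprod N.subtypeL) := by
  have hker := LinearMap.ker_coprod_of_disjoint_range M.subtype N.subtype
    (by simpa [disjoint_iff] using h)
  exact LinearMap.ker_eq_bot.mp (by simpa using hker)

theorem le_infDist_iff_forall_le_norm_add {c : ℝ} {x : X} :
    c ≤ infDist x N ↔ ∀ n ∈ N, c ≤ ‖x + n‖ := by
  rw [le_infDist ⟨0, N.zero_mem⟩]
  refine ⟨fun h n hn ↦ ?_, fun h n hn ↦ ?_⟩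
  · simpa [dist_eq_norm] using h (N.neg_mem hn)
  · simpa [dist_eq_norm, sub_eq_add_neg] using h (-n) (N.neg_mem hn)

theorem exists_pos_mul_norm_le_infDist_of_antilipschitz {K : NNReal}
    (hK : AntilipschitzWith K (M.subtypeL.coprod N.subtypeL)) :
    ∃ c > 0, ∀ m ∈ M, c * ‖m‖ ≤ infDist m N := by
  refine ⟨((K : ℝ) + 1)⁻¹, by positivity, fun m hm ↦ ?_⟩
  refine (N.le_infDist_iff_forall_le_norm_add).2 fun n hn ↦ ?_
  let p : M × N := (⟨m, hm⟩, ⟨n, hn⟩)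
  rw [inv_mul_le_iff₀ (by positivity)]
  calc ‖m‖ ≤ ‖p‖ := norm_fst_le p
    _ ≤ K * ‖m + n‖ := (M.subtypeL.coprod N.subtypeL).bound_of_antilipschitz hK p
    _ ≤ (K + 1) * ‖m + n‖ := by gcongr; linarith

theorem antilipschitz_coprod_subtypeL_of_le_infDist {c : ℝ} (hc : 0 < c)
    (h : ∀ m ∈ M, c * ‖m‖ ≤ infDist m N) :
    ∃ K, AntilipschitzWith K (M.subtypeL.coprod N.subtypeL) := by
  refine ⟨(c⁻¹ + 1).toNNReal, ContinuousLinearMap.antilipschitz_of_bound _ fun ⟨m, n⟩ ↦ ?_⟩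
  have hm : ‖(m : X)‖ ≤ c⁻¹ * ‖(m + n : X)‖ :=
    (le_inv_mul_iff₀ hc).2 ((N.le_infDist_iff_forall_le_norm_add).1 (h m m.2) n n.2)
  have hn : ‖(n : X)‖ ≤ ‖(m + n : X)‖ + ‖(m : X)‖ := by
    simpa using norm_sub_le (m + n : X) m
  rw [Real.coe_toNNReal _ (by positivity), ContinuousLinearMap.coprod_apply, Prod.norm_def]
  simp only [coe_norm, subtypeL_apply, max_le_iff]
  constructor <;> linarith [norm_nonneg (m + n : X)]

theorem isClosed_sup_iff_exists_pos_mul_norm_le_infDist [CompleteSpace X]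
    (hM : IsClosed (M : Set X)) (hN : IsClosed (N : Set X)) (h : M ⊓ N = ⊥) :
    IsClosed ((M ⊔ N : Submodule 𝕜 X) : Set X) ↔ ∃ c > 0, ∀ m ∈ M, c * ‖m‖ ≤ infDist m N := by
  have := hM.completeSpace_coe
  have := hN.completeSpace_coe
  rw [← range_coprod_subtypeL, ContinuousLinearMap.isClosed_range_iff_antilipschitz_of_injective
    _ (injective_coprod_subtypeL M N h)]
  exact ⟨fun ⟨K, hK⟩ ↦ exists_pos_mul_norm_le_infDist_of_antilipschitz M N hK,
    fun ⟨c, hc, hbound⟩ ↦ antilipschitz_coprod_subtypeL_of_le_infDist M N hc hbound⟩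

theorem setOf_infDist_div_infDist_inf_eq (h : M ⊓ N = ⊥) :
    {r : ℝ | ∃ x ∈ M, x ∉ N ∧ r = infDist x N / infDist x ((M ⊓ N : Submodule 𝕜 X) : Set X)} =
      {r : ℝ | ∃ x ∈ M, x ≠ 0 ∧ r = infDist x N / ‖x‖} := by
  have hmem : ∀ x ∈ M, x ∉ N ↔ x ≠ 0 := fun x hx ↦
    ⟨fun hxN hx0 ↦ hxN (hx0 ▸ N.zero_mem),
      fun hx0 hxN ↦ hx0 (by simpa [h] using mem_inf.2 ⟨hx, hxN⟩)⟩
  ext r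
  simp only [h, bot_coe, infDist_singleton, dist_zero_right, Set.mem_ofPred_eq]
  exact exists_congr fun x ↦ and_congr_right fun hx ↦ and_congr_left' (hmem x hx)

end Submodule

/-- Kato's gap quantity: for closed subspaces `M, N` with `M ⊄ N` and `M ∩ N = {0}`,
`γ(M, N) = inf{dist(x, N)/‖x‖ : 0 ≠ x ∈ M}`, and `γ(M, N) > 0` iff `M + N` is closed. -/
theorem gap_positive_iff_sum_closed
    (X : Type*) [NormedAddCommGroup X] [NormedSpace ℂ X] [CompleteSpace X]
    (M N : Submodule ℂ X)
    (hM : IsClosed (M : Set X)) (hN : IsClosed (N : Set X))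
    (hMN : ¬ M ≤ N) (hdisj : M ⊓ N = ⊥) :
    sInf {r : ℝ | ∃ x ∈ M, x ∉ N ∧
        r = Metric.infDist x (N : Set X) / Metric.infDist x ((M ⊓ N : Submodule ℂ X) : Set X)} =
      sInf {r : ℝ | ∃ x ∈ M, x ≠ 0 ∧ r = Metric.infDist x (N : Set X) / ‖x‖} ∧
    (0 < sInf {r : ℝ | ∃ x ∈ M, x ∉ N ∧
        r = Metric.infDist x (N : Set X) / Metric.infDist x ((M ⊓ N : Submodule ℂ X) : Set X)} ↔
      IsClosed ((M ⊔ N : Submodule ℂ X) : Set X)) := by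
  rw [M.setOf_infDist_div_infDist_inf_eq N hdisj,
    M.isClosed_sup_iff_exists_pos_mul_norm_le_infDist N hM hN hdisj]
  obtain ⟨x₀, hx₀M, hx₀N⟩ := SetLike.not_le_iff_exists.1 hMN
  have hx₀ : ∃ x ∈ (M : Set X), x ≠ 0 := ⟨x₀, hx₀M, fun h ↦ hx₀N (h ▸ N.zero_mem)⟩
  have hle (c : ℝ) :=
    le_csInf_div_norm_iff (f := (infDist · N)) (fun _ _ ↦ infDist_nonneg) hx₀ (c := c)
  exact ⟨rfl, fun hpos ↦ ⟨_, hpos, (hle _).1 le_rfl⟩,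
    fun ⟨c, hc, hbound⟩ ↦ hc.trans_le ((hle c).2 hbound)⟩
end
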